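/- arXiv:2210.13121 — 6 statements merged into one kernel-verified Lean document; each statement's English description precedes it below -/
import Mathlib

section
/- Let P be a probability measure on a measurable space 𝒳, let f : 𝒳 → ℝ be measurable, and let λ ∈ ℝ be such that ∫ e^{λf} dP < +∞. Define the probability measure Q_λ by dQ_λ/dP = e^{λf} / ∫ e^{λf} dP, and suppose f is Q_λ-integrable. Then for every probability measure R with R ≪ P, f R-integrable, and D(R‖P) < +∞, one has D(R‖P) − D(Q_λ‖P) = D(R‖Q_λ) + λ( ∫ f dR − ∫ f dQ_λ ); in particular D(R‖P) − D(Q_λ‖P) ≥ λ( ∫ f dR − ∫ f dQ_λ ). -/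
open MeasureTheory Filter Topology Real
open scoped ENNReal NNReal Classical

/-- Relative entropy `D(Q‖P)`: `∫ log (dQ/dP) dQ` if `Q ≪ P` (and the integral is
well-defined), `+∞` otherwise. -/
noncomputable def relEnt {X : Type*} [MeasurableSpace X] (Q P : Measure X) : ℝ≥0∞ :=
  if Q ≪ P ∧ Integrable (llr Q P) Q then ENNReal.ofReal (∫ x, llr Q P x ∂Q) else ⊤

/-!
Write `Z = ∫ exp g dP` and `Q = P.tilted g`, so that `log (dQ/dP) = g - log Z`. Then
`D(Q‖P) = ∫ g dQ - log Z` and, by the chain rule for densities,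
`D(R‖Q) = D(R‖P) - ∫ g dR + log Z`; subtracting gives the identity, and the inequality is
`D(R‖Q) ≥ 0`. All three divergences are finite, and Gibbs' inequality makes their integrals
nonnegative, so the identity may be computed in `ℝ`.
-/

namespace MeasureTheory

variable {X : Type*} [MeasurableSpace X] {μ ν : Measure X}

lemma integral_llr_nonneg [IsProbabilityMeasure μ] [IsProbabilityMeasure ν] (hμν : μ ≪ ν)
    (h_int : Integrable (llr μ ν) μ) : 0 ≤ ∫ x, llr μ ν x ∂μ := by
  simpa using InformationTheory.integral_llr_add_sub_measure_univ_nonneg hμν h_int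

lemma integrable_llr_of_relEnt_ne_top (h : relEnt μ ν ≠ ⊤) : Integrable (llr μ ν) μ := by
  by_contra h'
  exact h (if_neg fun h_ac ↦ h' h_ac.2)

lemma coe_relEnt_of_ac_of_integrable [IsProbabilityMeasure μ] [IsProbabilityMeasure ν]
    (hμν : μ ≪ ν) (h_int : Integrable (llr μ ν) μ) :
    (relEnt μ ν : EReal) = ((∫ x, llr μ ν x ∂μ : ℝ) : EReal) := by
  rw [relEnt, if_pos ⟨hμν, h_int⟩, EReal.coe_ennreal_ofReal,
    max_eq_left (integral_llr_nonneg hμν h_int)]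

lemma llr_tilted_self_ae_eq [SigmaFinite μ] {g : X → ℝ}
    (hg : Integrable (fun x ↦ exp (g x)) μ) :
    llr (μ.tilted g) μ =ᵐ[μ.tilted g] fun x ↦ g x - log (∫ y, exp (g y) ∂μ) := by
  have hgμ : AEMeasurable g μ := aemeasurable_of_aemeasurable_exp hg.aemeasurable
  refine (tilted_absolutelyContinuous μ g).ae_le ?_
  filter_upwards [llr_tilted_left .rfl hg hgμ, llr_self μ] with x hx hx_self
  rw [hx, hx_self, Pi.zero_apply, add_zero]

lemma integrable_llr_tilted_self [SigmaFinite μ] {g : X → ℝ}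
    (hg : Integrable (fun x ↦ exp (g x)) μ) (hgt : Integrable g (μ.tilted g)) :
    Integrable (llr (μ.tilted g) μ) (μ.tilted g) :=
  (integrable_congr (llr_tilted_self_ae_eq hg)).mpr (hgt.sub (integrable_const _))

lemma integral_llr_tilted_self [SigmaFinite μ] [NeZero μ] {g : X → ℝ}
    (hg : Integrable (fun x ↦ exp (g x)) μ) (hgt : Integrable g (μ.tilted g)) :
    ∫ x, llr (μ.tilted g) μ x ∂μ.tilted g = ∫ x, g x ∂μ.tilted g - log (∫ y, exp (g y) ∂μ) := by
  have : IsProbabilityMeasure (μ.tilted g) := isProbabilityMeasure_tilted hg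
  rw [integral_congr_ae (llr_tilted_self_ae_eq hg), integral_sub hgt (integrable_const _),
    integral_const, probReal_univ, one_smul]

lemma coe_relEnt_sub_coe_relEnt_tilted [IsProbabilityMeasure μ] [IsProbabilityMeasure ν]
    {g : X → ℝ} (hg : Integrable (fun x ↦ exp (g x)) ν) (hgt : Integrable g (ν.tilted g))
    (hμν : μ ≪ ν) (hgμ : Integrable g μ) (hμ : relEnt μ ν ≠ ⊤) :
    (relEnt μ ν : EReal) - relEnt (ν.tilted g) ν
      = relEnt μ (ν.tilted g) + ((∫ x, g x ∂μ - ∫ x, g x ∂ν.tilted g : ℝ) : EReal) := by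
  have : IsProbabilityMeasure (ν.tilted g) := isProbabilityMeasure_tilted hg
  have h_int := integrable_llr_of_relEnt_ne_top hμ
  have hμt : μ ≪ ν.tilted g := hμν.trans (absolutelyContinuous_tilted hg)
  rw [coe_relEnt_of_ac_of_integrable hμν h_int,
    coe_relEnt_of_ac_of_integrable (tilted_absolutelyContinuous ν g)
      (integrable_llr_tilted_self hg hgt),
    coe_relEnt_of_ac_of_integrable hμt (integrable_llr_tilted_right hμν hgμ h_int hg),
    ← EReal.coe_sub, ← EReal.coe_add, EReal.coe_eq_coe_iff, integral_llr_tilted_self hg hgt,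
    integral_llr_tilted_right hμν hgμ hg h_int]
  ring

end MeasureTheory

theorem relEnt_tilted_identity_general {X : Type*} [MeasurableSpace X]
    (P : Measure X) [IsProbabilityMeasure P] (f : X → ℝ) (l : ℝ)
    (hexp : Integrable (fun x => Real.exp (l * f x)) P)
    (Q : Measure X)
    (hQ : Q = P.withDensity fun x =>
      ENNReal.ofReal (Real.exp (l * f x) / ∫ y, Real.exp (l * f y) ∂P))
    (hfQ : Integrable f Q)
    (R : Measure X) [IsProbabilityMeasure R] (hRP : R ≪ P) (hfR : Integrable f R)
    (hDR : relEnt R P ≠ ⊤) :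
    (relEnt R P : EReal) - (relEnt Q P : EReal)
        = (relEnt R Q : EReal) + ((l * (∫ x, f x ∂ R - ∫ x, f x ∂Q) : ℝ) : EReal)
      ∧ ((l * (∫ x, f x ∂ R - ∫ x, f x ∂Q) : ℝ) : EReal)
          ≤ (relEnt R P : EReal) - (relEnt Q P : EReal) := by
  change Q = P.tilted (fun x ↦ l * f x) at hQ
  have key := coe_relEnt_sub_coe_relEnt_tilted hexp (hQ ▸ hfQ.const_mul l) hRP
    (hfR.const_mul l) hDR
  rw [← hQ, integral_const_mul, integral_const_mul, ← mul_sub] at key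
  exact ⟨key, key ▸ le_add_of_nonneg_left (EReal.coe_ennreal_nonneg _)⟩

/-- **Tilting identity for relative entropy.** If `dQ_λ/dP = e^{λ f}/∫ e^{λ f} dP`, then for
any probability measure `R ≪ P` with `f` `R`-integrable and `D(R‖P) < ∞`,
`D(R‖P) − D(Q_λ‖P) = D(R‖Q_λ) + λ(∫ f dR − ∫ f dQ_λ) ≥ λ(∫ f dR − ∫ f dQ_λ)`. -/
theorem relEnt_tilted_identity {X : Type*} [MeasurableSpace X]
    (P : Measure X) [IsProbabilityMeasure P] (f : X → ℝ) (hf : Measurable f) (l : ℝ)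
    (hexp : Integrable (fun x => Real.exp (l * f x)) P)
    (Q : Measure X)
    (hQ : Q = P.withDensity fun x =>
      ENNReal.ofReal (Real.exp (l * f x) / ∫ y, Real.exp (l * f y) ∂P))
    (hfQ : Integrable f Q)
    (R : Measure X) [IsProbabilityMeasure R] (hRP : R ≪ P) (hfR : Integrable f R)
    (hDR : relEnt R P ≠ ⊤) :
    (relEnt R P : EReal) - (relEnt Q P : EReal)
        = (relEnt R Q : EReal) + ((l * (∫ x, f x ∂ R - ∫ x, f x ∂Q) : ℝ) : EReal)
      ∧ ((l * (∫ x, f x ∂ R - ∫ x, f x ∂Q) : ℝ) : EReal)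
          ≤ (relEnt R P : EReal) - (relEnt Q P : EReal) :=
  relEnt_tilted_identity_general P f l hexp Q hQ hfQ R hRP hfR hDR
end

section
/- Let 𝒳 be a Polish space, let P be a Borel probability measure on 𝒳, and let Γ be a nonempty subset of the space of Borel probability measures on 𝒳 that is closed in the topology of weak convergence. Then there exists R* ∈ Γ with D(R*‖P) = inf_{R∈Γ} D(R‖P); i.e., the I-projection of P on Γ exists. -/
open MeasureTheory Filter Topology
open scoped ENNReal NNReal Classical

/-!
Take a minimizing sequence `Qₙ ∈ Γ`. By the Donsker–Varadhan variational formula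
`D(Q‖P) = sup_r (∫ r dQ - ∫ (exp r - 1) dP)` over bounded measurable `r`, testing against
`r = a • 1_s` shows that a family of bounded relative entropy is uniformly absolutely continuous
with respect to `P`. The Borel σ-algebra of a Polish space is countably generated, so a diagonal
argument over a countable `P`-dense family of sets gives a subsequence converging on every
measurable set, and uniform absolute continuity makes the limit σ-additive: a probability
measure `R*`. Setwise convergence implies weak convergence, hence `R* ∈ Γ`; it also gives
convergence of integrals of bounded measurable functions, so the variational formula yields
`D(R*‖P) ≤ liminf D(Qₙ‖P)`.
-/

open Real Set

lemma cauchySeq_of_forall_exists_cauchySeq_dist_le {α : Type*} [PseudoMetricSpace α]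
    {a : ℕ → α} (h : ∀ ε > 0, ∃ b : ℕ → α, CauchySeq b ∧ ∀ n, dist (a n) (b n) ≤ ε) :
    CauchySeq a := by
  refine Metric.cauchySeq_iff.2 fun ε hε ↦ ?_
  obtain ⟨b, hb, hab⟩ := h (ε / 4) (by positivity)
  obtain ⟨N, hN⟩ := Metric.cauchySeq_iff.1 hb (ε / 4) (by positivity)
  refine ⟨N, fun m hm n hn ↦ ?_⟩
  calc dist (a m) (a n) ≤ dist (a m) (b m) + dist (b m) (b n) + dist (b n) (a n) :=
        dist_triangle4 ..
    _ < ε := by linarith [hab m, hab n, hN m hm n hn, dist_comm (b n) (a n)]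

lemma MeasureTheory.ofReal_integral_le_lintegral_ofReal {X : Type*} [MeasurableSpace X]
    {μ : Measure X} (f : X → ℝ) :
    ENNReal.ofReal (∫ x, f x ∂μ) ≤ ∫⁻ x, ENNReal.ofReal (f x) ∂μ := by
  by_cases hf : Integrable f μ
  · rw [integral_eq_lintegral_pos_part_sub_lintegral_neg_part hf]
    exact ENNReal.ofReal_le_of_le_toReal (sub_le_self _ ENNReal.toReal_nonneg)
  · simp [integral_undef hf]

namespace InformationTheory

lemma mul_sub_exp_add_one_le_klFun (r : ℝ) {t : ℝ} (ht : 0 ≤ t) :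
    r * t - exp r + 1 ≤ klFun t := by
  rw [klFun]
  rcases ht.eq_or_lt with rfl | ht
  · simp [(exp_pos r).le]
  · -- `exp (r - log t) ≥ 1 + r - log t`, multiplied by `t`
    have h := mul_le_mul_of_nonneg_left (add_one_le_exp (r - log t)) ht.le
    rw [exp_sub, exp_log ht, mul_div_cancel₀ _ ht.ne'] at h
    nlinarith

lemma mul_log_sub_add_one_nonneg {t c : ℝ} (hc : 0 < c) (htc : 0 ≤ (t - c) * log c) :
    0 ≤ t * log c - c + 1 := by
  have := klFun_nonneg hc.le
  rw [klFun] at this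
  nlinarith

noncomputable def clampExp (k : ℕ) (t : ℝ) : ℝ := max (exp (-k)) (min (exp k) t)

lemma clampExp_pos (k : ℕ) (t : ℝ) : 0 < clampExp k t :=
  lt_max_of_lt_left (exp_pos _)

lemma abs_log_clampExp_le (k : ℕ) (t : ℝ) : |log (clampExp k t)| ≤ k := by
  have h₁ : exp (-k) ≤ clampExp k t := le_max_left _ _
  have h₂ : clampExp k t ≤ exp k := max_le (exp_le_exp.2 (by linarith [k.cast_nonneg (α := ℝ)]))
    (min_le_left _ _)
  rw [abs_le]
  constructor
  · simpa using log_le_log (exp_pos _) h₁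
  · simpa using log_le_log (clampExp_pos k t) h₂

lemma sub_clampExp_mul_log_nonneg (k : ℕ) (t : ℝ) :
    0 ≤ (t - clampExp k t) * log (clampExp k t) := by
  have hk : (0 : ℝ) ≤ k := k.cast_nonneg
  unfold clampExp
  rcases le_total t (exp k) with h | h
  · rw [min_eq_right h]
    rcases le_total t (exp (-k)) with h' | h'
    · rw [max_eq_left h', log_exp]; nlinarith
    · rw [max_eq_right h', sub_self, zero_mul]
  · rw [min_eq_left h, max_eq_right (exp_le_exp.2 (by linarith)), log_exp]; nlinarith

lemma tendsto_clampExp (t : ℝ) (ht : 0 ≤ t) :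
    Tendsto (fun k : ℕ ↦ clampExp k t) atTop (𝓝 t) := by
  have hlow : Tendsto (fun k : ℕ ↦ exp (-k)) atTop (𝓝 0) :=
    tendsto_exp_atBot.comp (tendsto_neg_atTop_atBot.comp tendsto_natCast_atTop_atTop)
  have hup : ∀ᶠ k : ℕ in atTop, min (exp k) t = t :=
    (tendsto_exp_atTop.comp tendsto_natCast_atTop_atTop).eventually_ge_atTop t
      |>.mono fun k hk ↦ min_eq_right hk
  simpa [clampExp, max_eq_right ht] using hlow.max ((tendsto_congr' hup).2 tendsto_const_nhds)

lemma tendsto_mul_log_clampExp_sub_add_one {t : ℝ} (ht : 0 ≤ t) :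
    Tendsto (fun k : ℕ ↦ t * log (clampExp k t) - clampExp k t + 1) atTop (𝓝 (klFun t)) := by
  rcases ht.eq_or_lt with rfl | ht
  · simpa [klFun, neg_add_eq_sub] using (tendsto_clampExp 0 le_rfl).const_sub 1
  · have : ContinuousAt (fun c ↦ t * log c - c + 1) t :=
      ((continuousAt_log ht.ne').const_mul t).sub continuousAt_id |>.add continuousAt_const
    have h := this.tendsto.comp (tendsto_clampExp t ht.le)
    rwa [show t * log t - t + 1 = klFun t by rw [klFun_apply]; ring] at h

variable {X : Type*} [MeasurableSpace X] {Q P : Measure X} [IsFiniteMeasure Q] [IsFiniteMeasure P]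
  {r : X → ℝ} {C : ℝ}

lemma integrable_exp_of_abs_le (hr : Measurable r) (hrC : ∀ x, |r x| ≤ C) :
    Integrable (fun x ↦ exp (r x)) P := by
  refine .of_bound (by fun_prop) (exp C) (ae_of_all _ fun x ↦ ?_)
  rw [norm_of_nonneg (exp_pos _).le]
  exact exp_le_exp.2 ((le_abs_self _).trans (hrC x))

lemma integrable_mul_rnDeriv_of_abs_le (hQP : Q ≪ P) (hr : Measurable r) (hrC : ∀ x, |r x| ≤ C) :
    Integrable (fun x ↦ r x * (Q.rnDeriv P x).toReal) P := by
  simpa [mul_comm] using (integrable_rnDeriv_smul_iff hQP).2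
    (Integrable.of_bound (μ := Q) hr.aestronglyMeasurable C (ae_of_all _ hrC))

lemma integral_sub_integral_exp_eq (hQP : Q ≪ P) (hr : Measurable r) (hrC : ∀ x, |r x| ≤ C) :
    ∫ x, r x ∂Q - ∫ x, (exp (r x) - 1) ∂P
      = ∫ x, (r x * (Q.rnDeriv P x).toReal - exp (r x) + 1) ∂P := by
  have hrf : Integrable (fun x ↦ (Q.rnDeriv P x).toReal • r x) P := by
    simpa [mul_comm] using integrable_mul_rnDeriv_of_abs_le hQP hr hrC
  have hexp : Integrable (fun x ↦ exp (r x) - 1) P :=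
    (integrable_exp_of_abs_le hr hrC).sub (integrable_const 1)
  rw [← integral_rnDeriv_smul hQP, ← integral_sub hrf hexp]
  congr 1 with x
  rw [smul_eq_mul]; ring

theorem ofReal_integral_sub_integral_exp_le_klDiv (hr : Measurable r) (hrC : ∀ x, |r x| ≤ C) :
    ENNReal.ofReal (∫ x, r x ∂Q - ∫ x, (exp (r x) - 1) ∂P) ≤ klDiv Q P := by
  by_cases hQP : Q ≪ P
  swap; · simp [hQP]
  rw [integral_sub_integral_exp_eq hQP hr hrC, klDiv_eq_lintegral_klFun_of_ac hQP]
  refine (ofReal_integral_le_lintegral_ofReal _).trans (lintegral_mono fun x ↦ ?_)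
  exact ENNReal.ofReal_le_ofReal (mul_sub_exp_add_one_le_klFun _ ENNReal.toReal_nonneg)

theorem klDiv_le_of_forall_ofReal_integral_sub_integral_exp_le (hQP : Q ≪ P) {d : ℝ≥0∞}
    (h : ∀ r : X → ℝ, Measurable r → ∀ C, (∀ x, |r x| ≤ C) →
      ENNReal.ofReal (∫ x, r x ∂Q - ∫ x, (exp (r x) - 1) ∂P) ≤ d) :
    klDiv Q P ≤ d := by
  set f : X → ℝ := fun x ↦ (Q.rnDeriv P x).toReal
  -- `log (clampExp k (f x))` is a bounded truncation of the optimal `r = log f`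
  set ψ : ℕ → X → ℝ := fun k x ↦
    log (clampExp k (f x)) * f x - exp (log (clampExp k (f x))) + 1
  have hψ k x : ψ k x = f x * log (clampExp k (f x)) - clampExp k (f x) + 1 := by
    simp only [ψ, exp_log (clampExp_pos _ _)]; ring
  have hr k : Measurable fun x ↦ log (clampExp k (f x)) := by unfold clampExp f; fun_prop
  have hrC k x : |log (clampExp k (f x))| ≤ k := abs_log_clampExp_le k (f x)
  have hψ_int k : ENNReal.ofReal (∫ x, ψ k x ∂P) = ∫⁻ x, ENNReal.ofReal (ψ k x) ∂P := by
    refine ofReal_integral_eq_lintegral_ofReal (((integrable_mul_rnDeriv_of_abs_le hQP (hr k)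
      (hrC k)).sub (integrable_exp_of_abs_le (hr k) (hrC k))).add (integrable_const 1))
      (ae_of_all _ fun x ↦ ?_)
    rw [Pi.zero_apply, hψ]
    exact mul_log_sub_add_one_nonneg (clampExp_pos _ _) (sub_clampExp_mul_log_nonneg k _)
  have hlim x : Tendsto (fun k ↦ ENNReal.ofReal (ψ k x)) atTop
      (𝓝 (ENNReal.ofReal (klFun (f x)))) := by
    simp_rw [hψ]
    exact (ENNReal.continuous_ofReal.tendsto _).comp
      (tendsto_mul_log_clampExp_sub_add_one ENNReal.toReal_nonneg)
  calc klDiv Q P = ∫⁻ x, liminf (fun k ↦ ENNReal.ofReal (ψ k x)) atTop ∂P := by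
        rw [klDiv_eq_lintegral_klFun_of_ac hQP]
        exact lintegral_congr fun x ↦ (hlim x).liminf_eq.symm
    _ ≤ liminf (fun k ↦ ∫⁻ x, ENNReal.ofReal (ψ k x) ∂P) atTop :=
        lintegral_liminf_le fun k ↦ by unfold ψ f; fun_prop
    _ ≤ d := by
        refine liminf_le_of_le (by isBoundedDefault) fun b hb ↦ ?_
        obtain ⟨k, hk⟩ := hb.exists
        refine hk.trans ?_
        rw [← hψ_int, ← integral_sub_integral_exp_eq hQP (hr k) (hrC k)]
        exact h _ (hr k) _ (hrC k)

end InformationTheory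

namespace MeasureTheory

variable {X : Type*} [MeasurableSpace X]

def UniformlyAbsolutelyContinuous {ι : Type*} (Q : ι → Measure X) (P : Measure X) : Prop :=
  ∀ ε > 0, ∃ δ > 0, ∀ i s, MeasurableSet s → P s ≤ δ → Q i s ≤ ε

namespace UniformlyAbsolutelyContinuous

lemma comp {ι κ : Type*} {Q : ι → Measure X} {P : Measure X}
    (hQ : UniformlyAbsolutelyContinuous Q P) (φ : κ → ι) :
    UniformlyAbsolutelyContinuous (Q ∘ φ) P :=
  fun ε hε ↦ (hQ ε hε).imp fun _ ⟨hδ, h⟩ ↦ ⟨hδ, fun i ↦ h (φ i)⟩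

variable {P : Measure X} [IsFiniteMeasure P] {Q : ℕ → Measure X}

theorem exists_subseq_setwise_convergent [MeasurableSpace.CountablyGenerated X]
    [∀ n, IsProbabilityMeasure (Q n)] (hQ : UniformlyAbsolutelyContinuous Q P) :
    ∃ φ : ℕ → ℕ, StrictMono φ ∧
      ∀ s, MeasurableSet s → ∃ l, Tendsto (fun n ↦ Q (φ n) s) atTop (𝓝 l) := by
  obtain ⟨𝒜, h𝒜c, h𝒜⟩ := exists_countable_measureDense P
  obtain ⟨e, rfl⟩ := h𝒜c.exists_eq_range h𝒜.nonempty
  -- sequential compactness of `ℕ → ℝ≥0∞` does the diagonal argument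
  obtain ⟨l, φ, hφ, hl⟩ := SeqCompactSpace.tendsto_subseq fun n k ↦ Q n (e k)
  refine ⟨φ, hφ, fun s hs ↦ ?_⟩
  suffices CauchySeq fun n ↦ (Q (φ n)).real s by
    obtain ⟨l, hl⟩ := cauchySeq_tendsto_of_complete this
    exact ⟨ENNReal.ofReal l, by simpa using ENNReal.tendsto_ofReal hl⟩
  refine cauchySeq_of_forall_exists_cauchySeq_dist_le fun ε hε ↦ ?_
  obtain ⟨δ, hδ, hQδ⟩ := hQ (ENNReal.ofReal ε) (ENNReal.ofReal_pos.2 hε)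
  obtain ⟨δ', -, hδ'0, hδ'δ⟩ := ENNReal.lt_iff_exists_real_btwn.1 hδ
  obtain ⟨-, ⟨k, rfl⟩, hk⟩ :=
    h𝒜.approx s hs (measure_ne_top _ _) δ' (ENNReal.ofReal_pos.1 hδ'0)
  have hlk : Tendsto (fun n ↦ Q (φ n) (e k)) atTop (𝓝 (l k)) := tendsto_pi_nhds.1 hl k
  have hlk_ne_top : l k ≠ ⊤ := ne_top_of_le_ne_top ENNReal.one_ne_top
    (le_of_tendsto' hlk fun n ↦ prob_le_one)
  refine ⟨fun n ↦ (Q (φ n)).real (e k),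
    ((ENNReal.tendsto_toReal hlk_ne_top).comp hlk).cauchySeq, fun n ↦ ?_⟩
  have hek : MeasurableSet (e k) := h𝒜.measurable _ ⟨k, rfl⟩
  refine (abs_measureReal_sub_le_measureReal_symmDiff hs.nullMeasurableSet
    hek.nullMeasurableSet).trans (ENNReal.toReal_le_of_le_ofReal hε.le ?_)
  exact hQδ _ _ (hs.symmDiff hek) (hk.le.trans hδ'δ.le)

theorem exists_measure_tendsto_setwise
    (hQ : UniformlyAbsolutelyContinuous Q P)
    (hlim : ∀ s, MeasurableSet s → ∃ l, Tendsto (fun n ↦ Q n s) atTop (𝓝 l)) :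
    ∃ μ : Measure X, ∀ s, MeasurableSet s → Tendsto (fun n ↦ Q n s) atTop (𝓝 (μ s)) := by
  choose! L hL using hlim
  have hL_empty : L ∅ = 0 := tendsto_nhds_unique (hL ∅ .empty) (by simp)
  have hL_small : ∀ ε > 0, ∃ δ > 0, ∀ s, MeasurableSet s → P s ≤ δ → L s ≤ ε := by
    intro ε hε
    obtain ⟨δ, hδ, hQδ⟩ := hQ ε hε
    exact ⟨δ, hδ, fun s hs hPs ↦ le_of_tendsto' (hL s hs) fun n ↦ hQδ n s hs hPs⟩
  have hL_iUnion : ∀ ⦃g : ℕ → Set X⦄, (∀ i, MeasurableSet (g i)) →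
      Pairwise (Function.onFun Disjoint g) → L (⋃ i, g i) = ∑' i, L (g i) := by
    intro g hg hd
    have hd' k : Pairwise (Function.onFun Disjoint fun i ↦ g (i + k)) :=
      hd.comp_of_injective (add_left_injective k)
    have hT k : MeasurableSet (⋃ i, g (i + k)) := .iUnion fun i ↦ hg _
    have hsplit k : L (⋃ i, g i) = ∑ i ∈ Finset.range k, L (g i) + L (⋃ i, g (i + k)) := by
      refine tendsto_nhds_unique (hL _ (.iUnion hg)) ?_
      have h n : Q n (⋃ i, g i) = ∑ i ∈ Finset.range k, Q n (g i) + Q n (⋃ i, g (i + k)) := by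
        rw [measure_iUnion hd hg, measure_iUnion (hd' k) fun i ↦ hg _,
          ENNReal.summable.hasSum.sum_range_add.tsum_eq]
      simp_rw [h]
      exact (tendsto_finsetSum _ fun i _ ↦ hL _ (hg i)).add (hL _ (hT k))
    have hP_tail : Tendsto (fun k ↦ P (⋃ i, g (i + k))) atTop (𝓝 0) := by
      simp_rw [measure_iUnion (hd' _) fun i ↦ hg _]
      exact ENNReal.tendsto_sum_nat_add _ (by rw [← measure_iUnion (μ := P) hd hg]; finiteness)
    have hL_tail : Tendsto (fun k ↦ L (⋃ i, g (i + k))) atTop (𝓝 0) := by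
      refine ENNReal.tendsto_nhds_zero.2 fun ε hε ↦ ?_
      obtain ⟨δ, hδ, hLδ⟩ := hL_small ε hε
      exact (ENNReal.tendsto_nhds_zero.1 hP_tail δ hδ).mono fun k hk ↦ hLδ _ (hT k) hk
    have := (ENNReal.tendsto_nat_tsum fun i ↦ L (g i)).add hL_tail
    rw [add_zero, ← funext hsplit] at this
    exact tendsto_nhds_unique tendsto_const_nhds this
  exact ⟨.ofMeasurable (fun s _ ↦ L s) hL_empty hL_iUnion, fun s hs ↦ by
    simpa [Measure.ofMeasurable_apply s hs] using hL s hs⟩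

theorem exists_subseq_tendsto_setwise [MeasurableSpace.CountablyGenerated X]
    [∀ n, IsProbabilityMeasure (Q n)] (hQ : UniformlyAbsolutelyContinuous Q P) :
    ∃ φ : ℕ → ℕ, StrictMono φ ∧ ∃ μ : ProbabilityMeasure X,
      ∀ s, MeasurableSet s → Tendsto (fun n ↦ Q (φ n) s) atTop (𝓝 ((μ : Measure X) s)) := by
  obtain ⟨φ, hφ, hlim⟩ := hQ.exists_subseq_setwise_convergent
  obtain ⟨μ, hμ⟩ := (hQ.comp φ).exists_measure_tendsto_setwise hlim
  have : IsProbabilityMeasure μ := ⟨tendsto_nhds_unique (hμ _ .univ) (by simp)⟩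
  exact ⟨φ, hφ, ⟨μ, this⟩, hμ⟩

end UniformlyAbsolutelyContinuous

section Setwise

variable {μ : ℕ → Measure X} [∀ n, IsProbabilityMeasure (μ n)] {ν : Measure X}

theorem tendsto_lintegral_of_tendsto_setwise
    (h : ∀ s, MeasurableSet s → Tendsto (fun n ↦ μ n s) atTop (𝓝 (ν s)))
    {f : X → ℝ} (hf : Measurable f) {C : ℝ} (hfC : ∀ x, f x ≤ C) :
    Tendsto (fun n ↦ ∫⁻ x, ENNReal.ofReal (f x) ∂μ n) atTop
      (𝓝 (∫⁻ x, ENNReal.ofReal (f x) ∂ν)) := by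
  have hpos (ρ : Measure X) :
      ∫⁻ x, ENNReal.ofReal (f x) ∂ρ = ∫⁻ t in Ioi 0, ρ {x | t < max (f x) 0} := by
    rw [← lintegral_eq_lintegral_meas_lt (f := fun x ↦ max (f x) 0) ρ
      (ae_of_all _ fun x ↦ le_max_right _ _) (by fun_prop)]
    simp [ENNReal.ofReal_max]
  simp_rw [hpos]
  -- layer cake: the integrands converge pointwise and are dominated by `1_{t ≤ C}`
  refine tendsto_lintegral_of_dominated_convergence ((Iic C).indicator 1)
    (fun n ↦ Antitone.measurable fun a b hab ↦ measure_mono fun x hx ↦ hab.trans_lt hx)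
    (fun n ↦ (ae_restrict_iff' measurableSet_Ioi).2 (ae_of_all _ fun t ht0 ↦ ?_)) ?_
    (ae_of_all _ fun t ↦ h _ (measurableSet_lt measurable_const (by fun_prop)))
  · by_cases htC : t ≤ C
    · simpa [htC] using prob_le_one
    · have : {x | t < max (f x) 0} = ∅ :=
        eq_empty_of_forall_notMem fun x hx ↦
        (max_lt ((hfC x).trans_lt (not_le.1 htC)) ht0).not_gt hx
      simp only [this, measure_empty, zero_le]
  · rw [lintegral_indicator_one measurableSet_Iic, Measure.restrict_apply measurableSet_Iic]
    exact ne_top_of_le_ne_top measure_Icc_lt_top.ne (measure_mono fun t ht ↦ ⟨ht.2.le, ht.1⟩)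

theorem tendsto_integral_of_tendsto_setwise [IsFiniteMeasure ν]
    (h : ∀ s, MeasurableSet s → Tendsto (fun n ↦ μ n s) atTop (𝓝 (ν s)))
    {f : X → ℝ} (hf : Measurable f) {C : ℝ} (hfC : ∀ x, |f x| ≤ C) :
    Tendsto (fun n ↦ ∫ x, f x ∂μ n) atTop (𝓝 (∫ x, f x ∂ν)) := by
  have hint (ρ : Measure X) [IsFiniteMeasure ρ] : Integrable f ρ :=
    .of_bound hf.aestronglyMeasurable C (ae_of_all _ hfC)
  simp_rw [integral_eq_lintegral_pos_part_sub_lintegral_neg_part (hint _)]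
  exact ((ENNReal.tendsto_toReal (hint ν).lintegral_lt_top.ne).comp
      (tendsto_lintegral_of_tendsto_setwise h hf fun x ↦ (le_abs_self _).trans (hfC x))).sub
    ((ENNReal.tendsto_toReal (hint ν).neg.lintegral_lt_top.ne).comp
      (tendsto_lintegral_of_tendsto_setwise h hf.neg fun x ↦ (neg_le_abs _).trans (hfC x)))

end Setwise

theorem ProbabilityMeasure.tendsto_of_tendsto_setwise [TopologicalSpace X]
    [OpensMeasurableSpace X] {μ : ℕ → ProbabilityMeasure X} {ν : ProbabilityMeasure X}
    (h : ∀ s, MeasurableSet s → Tendsto (fun n ↦ (μ n : Measure X) s) atTop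
      (𝓝 ((ν : Measure X) s))) :
    Tendsto μ atTop (𝓝 ν) :=
  tendsto_of_forall_isOpen_le_liminf' fun G hG ↦ (h G hG.measurableSet).liminf_eq.ge

end MeasureTheory

namespace InformationTheory

variable {X : Type*} [MeasurableSpace X] {P : Measure X} [IsFiniteMeasure P]

lemma ofReal_mul_measureReal_sub_le_klDiv {Q : Measure X} [IsFiniteMeasure Q] (a : ℝ)
    {s : Set X} (hs : MeasurableSet s) :
    ENNReal.ofReal (a * Q.real s - (exp a - 1) * P.real s) ≤ klDiv Q P := by
  have hexp : (fun x ↦ exp (s.indicator (fun _ ↦ a) x) - 1) = s.indicator fun _ ↦ exp a - 1 := by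
    ext x; by_cases hx : x ∈ s <;> simp [hx]
  have h := ofReal_integral_sub_integral_exp_le_klDiv (Q := Q) (P := P)
    (r := s.indicator fun _ ↦ a) (measurable_const.indicator hs) (C := |a|) fun x ↦ by
      by_cases hx : x ∈ s <;> simp [hx, abs_nonneg]
  rwa [hexp, integral_indicator_const _ hs, integral_indicator_const _ hs, smul_eq_mul,
    smul_eq_mul, mul_comm (Q.real s), mul_comm (P.real s)] at h

theorem uniformlyAbsolutelyContinuous_of_klDiv_le {ι : Type*} {Q : ι → Measure X}
    [∀ i, IsFiniteMeasure (Q i)] {c : ℝ≥0∞} (hc : c ≠ ⊤) (h : ∀ i, klDiv (Q i) P ≤ c) :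
    UniformlyAbsolutelyContinuous Q P := by
  intro ε hε
  obtain ⟨e, -, he', heε⟩ := ENNReal.lt_iff_exists_real_btwn.1 hε
  replace he' : 0 < e := ENNReal.ofReal_pos.1 he'
  -- `a Q(s) ≤ c + (exp a - 1) P(s)`, so `P(s) ≤ exp (-a)` forces `Q(s) ≤ (c + 1) / a = e`
  set a := (c.toReal + 1) / e
  refine ⟨ENNReal.ofReal (exp (-a)), ENNReal.ofReal_pos.2 (exp_pos _), fun i s hs hPs ↦ ?_⟩
  have hPs' : P.real s ≤ exp (-a) := ENNReal.toReal_le_of_le_ofReal (exp_pos _).le hPs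
  have hDV := (ofReal_mul_measureReal_sub_le_klDiv a hs).trans (h i)
  rw [ENNReal.ofReal_le_iff_le_toReal hc] at hDV
  have hexp : (exp a - 1) * P.real s ≤ 1 := calc
    (exp a - 1) * P.real s ≤ exp a * exp (-a) := by
      gcongr
      linarith [exp_pos a]
    _ = 1 := by rw [← exp_add, add_neg_cancel, exp_zero]
  have ha : a * e = c.toReal + 1 := div_mul_cancel₀ _ he'.ne'
  have hQs : (Q i).real s ≤ e := le_of_mul_le_mul_left (by linarith) (by positivity : 0 < a)
  exact (ENNReal.le_ofReal_iff_toReal_le (measure_ne_top _ _) he'.le |>.2 hQs).trans heε.le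

theorem klDiv_le_liminf_of_tendsto_setwise {Q : ℕ → Measure X} [∀ n, IsProbabilityMeasure (Q n)]
    {μ : Measure X} [IsFiniteMeasure μ] (hQP : ∀ n, Q n ≪ P)
    (h : ∀ s, MeasurableSet s → Tendsto (fun n ↦ Q n s) atTop (𝓝 (μ s))) :
    klDiv μ P ≤ liminf (fun n ↦ klDiv (Q n) P) atTop := by
  have hμP : μ ≪ P := .mk fun s hs hPs ↦
    tendsto_nhds_unique (h s hs) (by simp [hQP _ hPs])
  refine klDiv_le_of_forall_ofReal_integral_sub_integral_exp_le hμP fun r hr C hrC ↦ ?_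
  have hlim := (ENNReal.continuous_ofReal.tendsto _).comp
    ((tendsto_integral_of_tendsto_setwise h hr hrC).sub_const (∫ x, (exp (r x) - 1) ∂P))
  rw [← hlim.liminf_eq]
  exact liminf_le_liminf (.of_forall fun n ↦ ofReal_integral_sub_integral_exp_le_klDiv hr hrC)

end InformationTheory

open InformationTheory

lemma relEnt_eq_klDiv {X : Type*} [MeasurableSpace X] (Q P : Measure X) [IsProbabilityMeasure Q]
    [IsProbabilityMeasure P] : relEnt Q P = klDiv Q P := by
  by_cases h : Q ≪ P ∧ Integrable (llr Q P) Q
  · rw [relEnt, if_pos h, klDiv_of_ac_of_integrable h.1 h.2]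
    simp
  · rw [relEnt, if_neg h, eq_comm, klDiv_eq_top_iff]
    tauto

lemma exists_seq_mem_tendsto_biInf {α : Type*} {f : α → ℝ≥0∞} {s : Set α}
    (h : ⨅ x ∈ s, f x ≠ ⊤) :
    ∃ x : ℕ → α, (∀ n, x n ∈ s) ∧ (∀ n, f (x n) ≤ (⨅ x ∈ s, f x) + 1) ∧
      Tendsto (fun n ↦ f (x n)) atTop (𝓝 (⨅ x ∈ s, f x)) := by
  have (n : ℕ) : ∃ x ∈ s, f x < (⨅ x ∈ s, f x) + (n + 1 : ℝ≥0∞)⁻¹ :=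
    lt_biInf_iff.1 (ENNReal.lt_add_right h (by simp))
  choose x hxs hx using this
  refine ⟨x, hxs, fun n ↦ (hx n).le.trans (add_le_add_right (ENNReal.inv_le_one.2 le_add_self) _),
    tendsto_of_tendsto_of_tendsto_of_le_of_le tendsto_const_nhds ?_
      (fun n ↦ iInf₂_le _ (hxs n)) fun n ↦ (hx n).le⟩
  simpa using tendsto_const_nhds.add
    (ENNReal.tendsto_inv_nat_nhds_zero.comp (tendsto_add_atTop_nat 1))

/-- **Existence of the I-projection.** On a Polish space, if `Γ` is a nonempty set of Borel
probability measures that is closed in the weak topology, then some `R* ∈ Γ` attains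
`inf_{R ∈ Γ} D(R‖P)`. -/
theorem iProjection_exists {X : Type*} [MeasurableSpace X] [TopologicalSpace X]
    [PolishSpace X] [BorelSpace X]
    (P : Measure X) [IsProbabilityMeasure P]
    (Γ : Set (ProbabilityMeasure X)) (hne : Γ.Nonempty) (hclosed : IsClosed Γ) :
    ∃ Rstar ∈ Γ, relEnt (Rstar : Measure X) P = ⨅ R ∈ Γ, relEnt (R : Measure X) P := by
  simp_rw [relEnt_eq_klDiv]
  set m := ⨅ R ∈ Γ, klDiv (R : Measure X) P
  by_cases hm : m = ⊤
  · obtain ⟨R, hR⟩ := hne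
    exact ⟨R, hR, hm ▸ top_unique (hm ▸ iInf₂_le R hR)⟩
  obtain ⟨Q, hQΓ, hQm, hQ⟩ := exists_seq_mem_tendsto_biInf hm
  have hm1 : m + 1 ≠ ⊤ := ENNReal.add_ne_top.2 ⟨hm, ENNReal.one_ne_top⟩
  have hQP n : (Q n : Measure X) ≪ P := (klDiv_ne_top_iff.1 (ne_top_of_le_ne_top hm1 (hQm n))).1
  have hQ_uac := uniformlyAbsolutelyContinuous_of_klDiv_le hm1 hQm
  obtain ⟨φ, hφ, μ, hμ⟩ := hQ_uac.exists_subseq_tendsto_setwise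
  have hμΓ : μ ∈ Γ := hclosed.mem_of_tendsto
    (ProbabilityMeasure.tendsto_of_tendsto_setwise hμ) (.of_forall fun n ↦ hQΓ (φ n))
  refine ⟨μ, hμΓ, le_antisymm ?_ (iInf₂_le _ hμΓ)⟩
  calc klDiv (μ : Measure X) P ≤ liminf (fun n ↦ klDiv (Q (φ n) : Measure X) P) atTop :=
        klDiv_le_liminf_of_tendsto_setwise (fun n ↦ hQP (φ n)) hμ
    _ = m := (hQ.comp hφ.tendsto_atTop).liminf_eq
end

section
/- Let Q be a probability measure on ℝ^d such that ∫ e^{⟨λ,x⟩} dQ(x) < +∞ for all λ in a neighborhood of the origin, and let α := ∫ x dQ(x) ∈ ℝ^d be its mean. Then for every ε > 0, liminf_{n→∞} −(1/n) log Q^{⊗n}{ x^n : (1/n)∑_{i=1}^n x_i ∉ B_ε(α) } > 0; that is, ℙ{ (1/n)∑_{i=1}^n X_i ∉ B_ε(α) } → 0 exponentially fast for i.i.d. X_i ∼ Q, where B_ε(α) is the open ε-ball around α for the sup-norm on ℝ^d. -/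
open MeasureTheory Filter Topology
open scoped ENNReal NNReal Classical

/-! Chernoff's bound controls the upper tail of the empirical mean of a real function `g` by
`r ^ n` with `r = e^{-t(E g + ε)} E e^{tg}`; this expression equals `1` at `t = 0` and has
derivative `-ε` there, so some `t > 0` gives `r < 1`. A sample mean outside the sup-norm ball makes
the empirical mean of one of the `2d` functions `± x_j` exceed its mean by `ε`, and a union bound
over these events keeps the decay exponential. -/

/-- `-(1/n) log p`, as an extended real number. -/
noncomputable def negLogRate (n : ℕ) (p : ℝ≥0∞) : EReal :=
  (-(((n : ℝ)⁻¹ : ℝ) : EReal)) * ENNReal.log p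

open Real ProbabilityTheory

def DecaysExponentially (p : ℕ → ℝ≥0∞) : Prop :=
  ∃ C r : ℝ≥0∞, C ≠ ∞ ∧ r < 1 ∧ ∀ n, p n ≤ C * r ^ n

namespace DecaysExponentially

variable {p q : ℕ → ℝ≥0∞}

lemma mono (hq : DecaysExponentially q) (hpq : ∀ n, p n ≤ q n) : DecaysExponentially p := by
  obtain ⟨C, r, hC, hr, h⟩ := hq
  exact ⟨C, r, hC, hr, fun n => (hpq n).trans (h n)⟩

lemma zero : DecaysExponentially 0 :=
  ⟨0, 0, ENNReal.zero_ne_top, zero_lt_one, fun _ => zero_le⟩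

lemma add (hp : DecaysExponentially p) (hq : DecaysExponentially q) :
    DecaysExponentially (p + q) := by
  obtain ⟨C, r, hC, hr, hp⟩ := hp
  obtain ⟨D, s, hD, hs, hq⟩ := hq
  refine ⟨C + D, max r s, ENNReal.add_ne_top.2 ⟨hC, hD⟩, max_lt hr hs, fun n => ?_⟩
  calc p n + q n ≤ C * r ^ n + D * s ^ n := add_le_add (hp n) (hq n)
    _ ≤ C * max r s ^ n + D * max r s ^ n := by gcongr <;> simp
    _ = (C + D) * max r s ^ n := (add_mul _ _ _).symm

lemma finset_sum {ι : Type*} {p : ι → ℕ → ℝ≥0∞} (s : Finset ι)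
    (h : ∀ i ∈ s, DecaysExponentially (p i)) : DecaysExponentially (∑ i ∈ s, p i) := by
  induction s using Finset.induction_on with
  | empty => simpa using zero
  | insert i s hi ih =>
    rw [Finset.sum_insert hi]
    exact (h i (s.mem_insert_self i)).add (ih fun j hj => h j (Finset.mem_insert_of_mem hj))

end DecaysExponentially

lemma neg_log_le_negLogRate {n : ℕ} (hn : n ≠ 0) {p r : ℝ≥0∞} (hr0 : r ≠ 0) (hr : r ≠ ∞)
    (hp : p ≤ r ^ n) : -ENNReal.log r ≤ negLogRate n p := by
  have hlog : ENNReal.log p ≤ n * ENNReal.log r := ENNReal.log_pow ▸ ENNReal.log_le_log hp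
  rw [ENNReal.log_pos_real hr0 hr] at hlog ⊢
  have hn' : (n : ℝ) ≠ 0 := Nat.cast_ne_zero.2 hn
  calc -(Real.log r.toReal : EReal)
      = -(((n : ℝ)⁻¹ : ℝ) : EReal) * (n * Real.log r.toReal) := by norm_cast; field_simp
    _ ≤ negLogRate n p := by
      rw [negLogRate, mul_comm _ (ENNReal.log p), mul_comm _ (_ * _)]
      exact EReal.mul_le_mul_of_nonpos_right hlog (by simp)

lemma DecaysExponentially.liminf_negLogRate_pos {p : ℕ → ℝ≥0∞} (hp : DecaysExponentially p) :
    0 < liminf (fun n => negLogRate n (p n)) atTop := by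
  obtain ⟨C, r, hC, hr, hp⟩ := hp
  obtain ⟨s, hrs, hs1⟩ := exists_between hr
  have hs0 : s ≠ 0 := (zero_le.trans_lt hrs).ne'
  have hs : s ≠ ∞ := hs1.ne_top
  have hsmall : ∀ᶠ n in atTop, C * (r / s) ^ n < 1 := by
    have : Tendsto (fun n => C * (r / s) ^ n) atTop (𝓝 0) := by
      simpa using ENNReal.Tendsto.const_mul
        (ENNReal.tendsto_pow_atTop_nhds_zero_of_lt_one
          ((ENNReal.div_lt_iff (.inl hs0) (.inl hs)).2 (by simpa using hrs)))
        (.inr hC)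
    exact this.eventually_lt_const zero_lt_one
  have hev : ∀ᶠ n in atTop, -ENNReal.log s ≤ negLogRate n (p n) := by
    filter_upwards [hsmall, eventually_ne_atTop 0] with n hn hn0
    refine neg_log_le_negLogRate hn0 hs0 hs ((hp n).trans ?_)
    calc C * r ^ n = C * (r / s) ^ n * s ^ n := by
          rw [mul_assoc, ← mul_pow, ENNReal.div_mul_cancel hs0 hs]
      _ ≤ s ^ n := mul_le_of_le_one_left zero_le hn.le
  refine lt_of_lt_of_le ?_ (le_liminf_of_le (by isBoundedDefault) hev)
  simpa using hs1

section Chernoff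

variable {Ω : Type*} {mΩ : MeasurableSpace Ω} {μ : Measure Ω} [IsProbabilityMeasure μ]
  {X : Ω → ℝ}

lemma exists_pos_exp_mul_mgf_lt_one (h0 : 0 ∈ interior (integrableExpSet X μ)) {ε : ℝ}
    (hε : 0 < ε) :
    ∃ t, 0 < t ∧ t ∈ integrableExpSet X μ ∧ exp (-t * (μ[X] + ε)) * mgf X μ t < 1 := by
  set G : ℝ → ℝ := fun t => exp (-t * (μ[X] + ε)) * mgf X μ t
  have hG0 : G 0 = 1 := by simp [G]
  have hG' : HasDerivAt G (-ε) 0 := by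
    have hexp : HasDerivAt (fun t : ℝ => exp (-t * (μ[X] + ε))) (-(μ[X] + ε)) 0 := by
      simpa using ((hasDerivAt_neg (0 : ℝ)).mul_const (μ[X] + ε)).exp
    refine (hexp.mul (hasDerivAt_mgf h0)).congr_deriv ?_
    simp
  have hslope : ∀ᶠ t in 𝓝[>] 0, slope G 0 t < 0 := by
    simpa using hG'.hasDerivWithinAt.limsup_slope_le (s := Set.Ioi 0) (neg_lt_zero.2 hε)
  have hint : ∀ᶠ t in 𝓝[>] (0 : ℝ), t ∈ integrableExpSet X μ :=
    nhdsWithin_le_nhds (mem_interior_iff_mem_nhds.1 h0)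
  obtain ⟨t, ht_slope, ht_int, ht_pos⟩ :=
    (hslope.and (hint.and self_mem_nhdsWithin)).exists
  refine ⟨t, ht_pos, ht_int, ?_⟩
  rw [slope_def_field, hG0, sub_zero, div_lt_iff₀ ht_pos, zero_mul, sub_neg] at ht_slope
  exact ht_slope

variable {E : Type*} [MeasurableSpace E] {Q : Measure E} [IsProbabilityMeasure Q] {g : E → ℝ}

lemma mgf_sum_comp_eval_pi {ι : Type*} [Fintype ι] (t : ℝ) :
    mgf (fun x : ι → E => ∑ i, g (x i)) (Measure.pi fun _ => Q) t =
      mgf g Q t ^ Fintype.card ι := by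
  simp_rw [mgf, Finset.mul_sum, exp_sum]
  exact integral_fintype_prod_eq_pow (fun y => exp (t * g y))

lemma measureReal_pi_sum_ge_le_pow {t : ℝ} (ht : 0 ≤ t) (hint : t ∈ integrableExpSet g Q)
    (a : ℝ) (n : ℕ) :
    (Measure.pi fun _ : Fin n => Q).real {x | n * a ≤ ∑ i, g (x i)} ≤
      (exp (-t * a) * mgf g Q t) ^ n := by
  have hint_pi : Integrable (fun x : Fin n → E => exp (t * ∑ i, g (x i)))
      (Measure.pi fun _ => Q) := by
    simp_rw [Finset.mul_sum, exp_sum]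
    exact Integrable.fintype_prod fun _ => hint
  calc _ ≤ exp (-t * (n * a)) * mgf (fun x : Fin n → E => ∑ i, g (x i))
        (Measure.pi fun _ => Q) t := measure_ge_le_exp_mul_mgf _ ht hint_pi
    _ = _ := by
      rw [mgf_sum_comp_eval_pi, Fintype.card_fin, mul_pow, ← exp_nat_mul]
      ring_nf

theorem decaysExponentially_measure_pi_sum_ge (h0 : 0 ∈ interior (integrableExpSet g Q))
    {ε : ℝ} (hε : 0 < ε) :
    DecaysExponentially fun n =>
      (Measure.pi fun _ : Fin n => Q) {x | n * (Q[g] + ε) ≤ ∑ i, g (x i)} := by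
  obtain ⟨t, ht, hint, hlt⟩ := exists_pos_exp_mul_mgf_lt_one h0 hε
  refine ⟨1, ENNReal.ofReal (exp (-t * (Q[g] + ε)) * mgf g Q t), ENNReal.one_ne_top,
    ENNReal.ofReal_lt_one.2 hlt, fun n => ?_⟩
  dsimp only
  rw [one_mul, ← ENNReal.ofReal_pow (mul_nonneg (exp_pos _).le mgf_nonneg), ← ofReal_measureReal]
  exact ENNReal.ofReal_le_ofReal (measureReal_pi_sum_ge_le_pow ht.le hint _ n)

end Chernoff

lemma zero_mem_interior_integrableExpSet_dotProduct {ι : Type*} [Fintype ι]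
    {Q : Measure (ι → ℝ)}
    (hexp : ∃ s ∈ 𝓝 (0 : ι → ℝ), ∀ l ∈ s, Integrable (fun x => exp (∑ j, l j * x j)) Q)
    (l : ι → ℝ) : 0 ∈ interior (integrableExpSet (fun x => l ⬝ᵥ x) Q) := by
  obtain ⟨s, hs, hint⟩ := hexp
  have hcont : Tendsto (fun t : ℝ => t • l) (𝓝 0) (𝓝 0) :=
    (continuous_id.smul continuous_const).tendsto' 0 0 (zero_smul ℝ l)
  refine mem_interior_iff_mem_nhds.2 (Filter.mem_of_superset (hcont hs) fun t ht => ?_)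
  have : Integrable (fun x => exp ((t • l) ⬝ᵥ x)) Q := hint _ ht
  simpa only [integrableExpSet, Set.mem_ofPred_eq, smul_dotProduct, smul_eq_mul] using this

lemma setOf_inv_smul_sum_notMem_ball_subset {ι : Type*} [Fintype ι] (n : ℕ) (α : ι → ℝ)
    {ε : ℝ} (hε : 0 < ε) :
    {x : Fin n → ι → ℝ | (n : ℝ)⁻¹ • ∑ i, x i ∉ Metric.ball α ε} ⊆
      ⋃ j, ({x | n * (α j + ε) ≤ ∑ i, x i j} ∪ {x | n * (-α j + ε) ≤ ∑ i, -x i j}) := by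
  intro x hx
  simp only [Set.mem_ofPred_eq, Metric.mem_ball, dist_pi_lt_iff hε, not_forall, not_lt,
    Real.dist_eq, Pi.smul_apply, Finset.sum_apply, smul_eq_mul] at hx
  obtain ⟨j, hj⟩ := hx
  refine Set.mem_iUnion.2 ⟨j, ?_⟩
  rcases n.eq_zero_or_pos with rfl | hn
  · simp
  have hn : (0 : ℝ) < n := Nat.cast_pos.2 hn
  have hscale : (n : ℝ) * ((n : ℝ)⁻¹ * ∑ i, x i j) = ∑ i, x i j := mul_inv_cancel_left₀ hn.ne' _
  simp only [Set.mem_union, Set.mem_ofPred_eq, Finset.sum_neg_distrib]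
  rcases le_abs'.1 hj with h | h
  · exact .inr (by linarith [mul_le_mul_of_nonneg_left h hn.le])
  · exact .inl (by linarith [mul_le_mul_of_nonneg_left h hn.le])

/-- **Exponential concentration of sample means on sup-norm balls.** If `Q` on `ℝ^d` has
finite exponential moments in a neighborhood of the origin and mean `α`, then for every
`ε > 0` the probability that the sample mean leaves the open sup-norm `ε`-ball around `α`
decays exponentially:
`liminf_n -(1/n) log Q^{⊗n}{ x^n : (1/n)∑ x_i ∉ B_ε(α) } > 0`.
(Here `Fin d → ℝ` carries the sup-norm, so `Metric.ball α ε` is the sup-norm ball.) -/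
theorem sampleMean_concentration {d : ℕ} (Q : Measure (Fin d → ℝ)) [IsProbabilityMeasure Q]
    (hexp : ∃ s ∈ 𝓝 (0 : Fin d → ℝ), ∀ l ∈ s,
      Integrable (fun x => Real.exp (∑ j, l j * x j)) Q)
    (α : Fin d → ℝ) (hα : α = ∫ x, x ∂Q) :
    ∀ ε : ℝ, 0 < ε →
      (0 : EReal) < liminf (fun n : ℕ =>
        negLogRate n ((Measure.pi fun _ : Fin n => Q)
          {x | (n : ℝ)⁻¹ • ∑ i, x i ∉ Metric.ball α ε})) atTop := by
  intro ε hε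
  have h_coord (j : Fin d) : 0 ∈ interior (integrableExpSet (fun x => x j) Q) := by
    simpa using zero_mem_interior_integrableExpSet_dotProduct hexp (Pi.single j 1)
  have h_neg (j : Fin d) : 0 ∈ interior (integrableExpSet (fun x => -x j) Q) := by
    simpa using zero_mem_interior_integrableExpSet_dotProduct hexp (Pi.single j (-1))
  have h_mean (j : Fin d) : Q[fun x => x j] = α j := by
    rw [hα, eval_integral fun j => integrable_of_mem_interior_integrableExpSet (h_coord j)]
  refine DecaysExponentially.liminf_negLogRate_pos <|
    (DecaysExponentially.finset_sum Finset.univ fun j _ =>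
      (decaysExponentially_measure_pi_sum_ge (h_coord j) hε).add
        (decaysExponentially_measure_pi_sum_ge (h_neg j) hε)).mono fun n => ?_
  refine (measure_mono (setOf_inv_smul_sum_notMem_ball_subset n α hε)).trans <|
    (measure_iUnion_fintype_le _ _).trans ?_
  simp only [Finset.sum_apply, Pi.add_apply, h_mean, integral_neg]
  gcongr with j
  exact measure_union_le _ _
end

section
/- Let 𝒳 be a metric space and let {μ_n} be an exponentially tight sequence of Borel probability measures on 𝒳. For x ∈ 𝒳 define γ_−(x) := lim_{ε↓0} liminf_{n→∞} −(1/n) log μ_n(B_ε(x)) and γ_+(x) := lim_{ε↓0} limsup_{n→∞} −(1/n) log μ_n(B_ε(x)), where B_ε(x) is the open metric ball. Then: (a) for every closed set F ⊆ 𝒳, liminf_{n→∞} −(1/n) log μ_n(F) ≥ inf_{x∈F} γ_−(x); (b) for every open set G ⊆ 𝒳, limsup_{n→∞} −(1/n) log μ_n(G) ≤ inf_{x∈G} γ_+(x); (c) if γ_−(x) = γ_+(x) =: γ(x) for all x ∈ 𝒳, then {μ_n} satisfies the large deviation principle with rate function γ. -/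
open MeasureTheory Filter Topology
open scoped ENNReal NNReal Classical

/-- `γ₋(x) = lim_{ε↓0} liminf_n -(1/n) log μ_n(B_ε(x))`; since the inner quantity is
nonincreasing in `ε`, the limit as `ε ↓ 0` is the supremum over `ε > 0`. -/
noncomputable def gammaMinus {X : Type*} [MeasurableSpace X] [MetricSpace X]
    (μ : ℕ → Measure X) (x : X) : EReal :=
  ⨆ (ε : ℝ) (_ : 0 < ε), liminf (fun n : ℕ => negLogRate n (μ n (Metric.ball x ε))) atTop

/-- `γ₊(x) = lim_{ε↓0} limsup_n -(1/n) log μ_n(B_ε(x))`; since the inner quantity is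
nonincreasing in `ε`, the limit as `ε ↓ 0` is the supremum over `ε > 0`. -/
noncomputable def gammaPlus {X : Type*} [MeasurableSpace X] [MetricSpace X]
    (μ : ℕ → Measure X) (x : X) : EReal :=
  ⨆ (ε : ℝ) (_ : 0 < ε), limsup (fun n : ℕ => negLogRate n (μ n (Metric.ball x ε))) atTop

/-!
The upper bound on open sets is local: an open set contains a ball around each of its points.
For the lower bound on a closed set `F`, exponential tightness reduces it to the compact set
`F ∩ K` up to the tail `μ_n(Kᶜ)`, whose decay rate is as large as we like. A compact set is
covered by finitely many balls on which the decay rate exceeds the target, and the principle of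
the largest term (`-(1/n) log` of a sum decays at the slowest of the two rates) glues the pieces
together. Part (c) is (a) and (b) applied to the closure and the interior.
-/

lemma negLogRate_antitone (n : ℕ) : Antitone (negLogRate n) := fun p q h => by
  unfold negLogRate
  rw [EReal.neg_mul, EReal.neg_mul, EReal.neg_le_neg_iff]
  exact mul_le_mul_of_nonneg_left (ENNReal.log_monotone h) (EReal.coe_nonneg.mpr (by positivity))

lemma negLogRate_zero {n : ℕ} (hn : n ≠ 0) : negLogRate n 0 = ⊤ := by
  have : (0 : ℝ) < (n : ℝ)⁻¹ := by positivity
  rw [negLogRate, ENNReal.log_zero, ← EReal.coe_neg, EReal.coe_mul_bot_of_neg (by linarith)]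

lemma negLogRate_eq_coe {p : ℝ≥0∞} (hp0 : p ≠ 0) (hp : p ≠ ⊤) (n : ℕ) :
    negLogRate n p = ((-((n : ℝ)⁻¹ * Real.log p.toReal) : ℝ) : EReal) := by
  rw [negLogRate, ENNReal.log_pos_real hp0 hp, ← EReal.coe_neg, ← EReal.coe_mul, neg_mul]

lemma negLogRate_mul {p : ℝ≥0∞} (hp0 : p ≠ 0) (hp : p ≠ ⊤) (n : ℕ) (q : ℝ≥0∞) :
    negLogRate n (p * q) = negLogRate n p + negLogRate n q := by
  have hc : (0 : EReal) ≤ ((n : ℝ)⁻¹ : ℝ) := EReal.coe_nonneg.mpr (by positivity)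
  simp only [negLogRate, ENNReal.log_mul_add, EReal.neg_mul,
    EReal.left_distrib_of_nonneg_of_ne_top hc (EReal.coe_ne_top _)]
  rw [ENNReal.log_pos_real hp0 hp, ← EReal.coe_mul]
  exact EReal.neg_add (.inl (EReal.coe_ne_bot _)) (.inl (EReal.coe_ne_top _))

lemma tendsto_negLogRate_atTop {p : ℝ≥0∞} (hp0 : p ≠ 0) (hp : p ≠ ⊤) :
    Tendsto (fun n => negLogRate n p) atTop (𝓝 0) := by
  simp_rw [negLogRate_eq_coe hp0 hp]
  rw [← EReal.coe_zero]
  refine EReal.continuous_coe_iff.mpr continuous_id |>.tendsto _ |>.comp ?_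
  simpa using ((tendsto_inv_atTop_nhds_zero_nat (𝕜 := ℝ)).mul_const (Real.log p.toReal)).neg

lemma liminf_negLogRate_le_of_le {p q : ℕ → ℝ≥0∞} (h : ∀ n, p n ≤ q n) :
    liminf (fun n => negLogRate n (q n)) atTop ≤ liminf (fun n => negLogRate n (p n)) atTop :=
  liminf_le_liminf (.of_forall fun n => negLogRate_antitone n (h n))

lemma limsup_negLogRate_le_of_le {p q : ℕ → ℝ≥0∞} (h : ∀ n, p n ≤ q n) :
    limsup (fun n => negLogRate n (q n)) atTop ≤ limsup (fun n => negLogRate n (p n)) atTop :=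
  limsup_le_limsup (.of_forall fun n => negLogRate_antitone n (h n))

lemma liminf_negLogRate_zero : liminf (fun n => negLogRate n 0) atTop = ⊤ :=
  (tendsto_atTop_of_eventually_const (i₀ := 1)
    fun _ hn => negLogRate_zero (by omega)).liminf_eq

/-- The principle of the largest term: `p + q ≤ 2 max p q`, and the factor `2` costs only
`log 2 / n → 0`. -/
lemma min_liminf_negLogRate_le_liminf_add (p q : ℕ → ℝ≥0∞) :
    min (liminf (fun n => negLogRate n (p n)) atTop) (liminf (fun n => negLogRate n (q n)) atTop)
      ≤ liminf (fun n => negLogRate n (p n + q n)) atTop := by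
  have h2 : (2 : ℝ≥0∞) ≠ 0 := two_ne_zero
  have h2' : (2 : ℝ≥0∞) ≠ ⊤ := ENNReal.ofNat_ne_top
  have hmax (n : ℕ) : negLogRate n 2 + min (negLogRate n (p n)) (negLogRate n (q n))
      ≤ negLogRate n (p n + q n) := by
    rw [← (negLogRate_antitone n).map_max, ← negLogRate_mul h2 h2']
    exact negLogRate_antitone n (by rw [two_mul]; gcongr <;> simp)
  calc _ = liminf (fun n => negLogRate n 2) atTop
        + liminf (fun n => min (negLogRate n (p n)) (negLogRate n (q n))) atTop := by
        rw [(tendsto_negLogRate_atTop h2 h2').liminf_eq, zero_add, liminf_min]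
    _ ≤ _ := EReal.le_liminf_add.trans (liminf_le_liminf (.of_forall hmax))

lemma min_liminf_negLogRate_le_liminf_union {X : Type*} [MeasurableSpace X]
    (μ : ℕ → Measure X) (s t : Set X) :
    min (liminf (fun n => negLogRate n (μ n s)) atTop)
        (liminf (fun n => negLogRate n (μ n t)) atTop)
      ≤ liminf (fun n => negLogRate n (μ n (s ∪ t))) atTop :=
  (min_liminf_negLogRate_le_liminf_add _ _).trans
    (liminf_negLogRate_le_of_le fun _ => measure_union_le s t)

section

variable {X : Type*} [MeasurableSpace X] [MetricSpace X] (μ : ℕ → Measure X)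

lemma iInf_gammaMinus_le_liminf_of_isCompact {K : Set X} (hK : IsCompact K) :
    ⨅ x ∈ K, gammaMinus μ x ≤ liminf (fun n => negLogRate n (μ n K)) atTop := by
  refine le_of_forall_lt_imp_le_of_dense fun c hc => ?_
  refine hK.induction_on (p := fun s => c ≤ liminf (fun n => negLogRate n (μ n s)) atTop)
    (by simp [liminf_negLogRate_zero]) (fun s t hst ht => ?_) (fun s t hs ht => ?_)
    (fun x hx => ?_)
  · exact ht.trans (liminf_negLogRate_le_of_le fun _ => measure_mono hst)
  · exact (le_min hs ht).trans (min_liminf_negLogRate_le_liminf_union μ s t)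
  · obtain ⟨ε, hε, hball⟩ : ∃ ε > 0,
        c < liminf (fun n => negLogRate n (μ n (Metric.ball x ε))) atTop := by
      simpa only [gammaMinus, lt_iSup_iff, exists_prop] using hc.trans_le (biInf_le _ hx)
    exact ⟨_, mem_nhdsWithin_of_mem_nhds (Metric.ball_mem_nhds x hε), hball.le⟩

lemma iInf_gammaMinus_le_liminf_of_isClosed
    (htight : ∀ b : ℝ, 0 < b → ∃ K : Set X, IsCompact K ∧
      (b : EReal) ≤ liminf (fun n : ℕ => negLogRate n (μ n Kᶜ)) atTop)
    {F : Set X} (hF : IsClosed F) :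
    ⨅ x ∈ F, gammaMinus μ x ≤ liminf (fun n => negLogRate n (μ n F)) atTop := by
  refine le_of_forall_lt_imp_le_of_dense fun c hc => ?_
  obtain ⟨b, hcb, hb⟩ : ∃ b : ℝ, c ≤ b ∧ 0 < b := by
    obtain ⟨b, hcb, -⟩ := EReal.exists_between_coe_real (hc.trans_le le_top)
    exact ⟨max b 1, hcb.le.trans (EReal.coe_le_coe_iff.mpr (le_max_left _ _)), by positivity⟩
  obtain ⟨K, hK, hKc⟩ := htight b hb
  have hFK : c ≤ liminf (fun n => negLogRate n (μ n (F ∩ K))) atTop :=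
    (hc.le.trans (biInf_mono fun _ => And.left)).trans
      (iInf_gammaMinus_le_liminf_of_isCompact μ (hK.inter_left hF))
  calc c ≤ min (liminf (fun n => negLogRate n (μ n Kᶜ)) atTop)
        (liminf (fun n => negLogRate n (μ n (F ∩ K))) atTop) := le_min (hcb.trans hKc) hFK
    _ ≤ liminf (fun n => negLogRate n (μ n (Kᶜ ∪ F ∩ K))) atTop :=
        min_liminf_negLogRate_le_liminf_union μ _ _
    _ ≤ _ := liminf_negLogRate_le_of_le fun _ => measure_mono fun x hx => by
        by_cases hxK : x ∈ K
        exacts [Or.inr ⟨hx, hxK⟩, Or.inl hxK]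

lemma limsup_le_iInf_gammaPlus_of_isOpen {G : Set X} (hG : IsOpen G) :
    limsup (fun n => negLogRate n (μ n G)) atTop ≤ ⨅ x ∈ G, gammaPlus μ x := by
  refine le_iInf₂ fun x hx => ?_
  obtain ⟨ε, hε, hball⟩ := Metric.isOpen_iff.mp hG x hx
  exact (limsup_negLogRate_le_of_le fun _ => measure_mono hball).trans
    (le_iSup₂ (f := fun ε (_ : 0 < ε) =>
      limsup (fun n => negLogRate n (μ n (Metric.ball x ε))) atTop) ε hε)

end

theorem general_principle_general {X : Type*} [MeasurableSpace X] [MetricSpace X]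
    (μ : ℕ → Measure X)
    (htight : ∀ b : ℝ, 0 < b → ∃ K : Set X, IsCompact K ∧
      (b : EReal) ≤ liminf (fun n : ℕ => negLogRate n (μ n Kᶜ)) atTop) :
    (∀ F : Set X, IsClosed F →
      (⨅ x ∈ F, gammaMinus μ x)
        ≤ liminf (fun n : ℕ => negLogRate n (μ n F)) atTop)
    ∧ (∀ G : Set X, IsOpen G →
      limsup (fun n : ℕ => negLogRate n (μ n G)) atTop
        ≤ ⨅ x ∈ G, gammaPlus μ x)
    ∧ ((∀ x : X, gammaMinus μ x = gammaPlus μ x) →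
      ∀ Γ : Set X, MeasurableSet Γ →
        (⨅ x ∈ closure Γ, gammaMinus μ x)
            ≤ liminf (fun n : ℕ => negLogRate n (μ n Γ)) atTop
          ∧ liminf (fun n : ℕ => negLogRate n (μ n Γ)) atTop
            ≤ limsup (fun n : ℕ => negLogRate n (μ n Γ)) atTop
          ∧ limsup (fun n : ℕ => negLogRate n (μ n Γ)) atTop
            ≤ ⨅ x ∈ interior Γ, gammaMinus μ x) := by
  have lower := fun F (hF : IsClosed F) => iInf_gammaMinus_le_liminf_of_isClosed μ htight hF
  have upper := fun G (hG : IsOpen G) => limsup_le_iInf_gammaPlus_of_isOpen μ hG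
  refine ⟨lower, upper, fun hγ Γ _ => ⟨?_, liminf_le_limsup, ?_⟩⟩
  · exact (lower _ isClosed_closure).trans
      (liminf_negLogRate_le_of_le fun _ => measure_mono subset_closure)
  · simp only [hγ]
    exact (limsup_negLogRate_le_of_le (p := fun n => μ n (interior Γ))
      fun _ => measure_mono interior_subset).trans (upper _ isOpen_interior)

/-- **General principle for exponentially tight families.** For an exponentially tight
sequence of Borel probability measures on a metric space: (a) large deviation lower bound on
closed sets with `γ₋`; (b) upper bound on open sets with `γ₊`; (c) if `γ₋ = γ₊ = γ`
everywhere, the LDP holds with rate function `γ`. -/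
theorem general_principle {X : Type*} [MeasurableSpace X] [MetricSpace X] [BorelSpace X]
    (μ : ℕ → Measure X) (hprob : ∀ n, IsProbabilityMeasure (μ n))
    (htight : ∀ b : ℝ, 0 < b → ∃ K : Set X, IsCompact K ∧
      (b : EReal) ≤ liminf (fun n : ℕ => negLogRate n (μ n Kᶜ)) atTop) :
    (∀ F : Set X, IsClosed F →
      (⨅ x ∈ F, gammaMinus μ x)
        ≤ liminf (fun n : ℕ => negLogRate n (μ n F)) atTop)
    ∧ (∀ G : Set X, IsOpen G →
      limsup (fun n : ℕ => negLogRate n (μ n G)) atTop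
        ≤ ⨅ x ∈ G, gammaPlus μ x)
    ∧ ((∀ x : X, gammaMinus μ x = gammaPlus μ x) →
      ∀ Γ : Set X, MeasurableSet Γ →
        (⨅ x ∈ closure Γ, gammaMinus μ x)
            ≤ liminf (fun n : ℕ => negLogRate n (μ n Γ)) atTop
          ∧ liminf (fun n : ℕ => negLogRate n (μ n Γ)) atTop
            ≤ limsup (fun n : ℕ => negLogRate n (μ n Γ)) atTop
          ∧ limsup (fun n : ℕ => negLogRate n (μ n Γ)) atTop
            ≤ ⨅ x ∈ interior Γ, gammaMinus μ x) :=
  general_principle_general μ htight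
end

section
/- Let Z_n be ℝ^d-valued random vectors with laws μ_n and logarithmic moment generating functions Λ_n(λ) := log E[e^{⟨λ,Z_n⟩}]. Assume that for each λ ∈ ℝ^d the limit Λ(λ) := lim_{n→∞} (1/n)Λ_n(nλ) exists as an extended real number, and that the origin lies in the interior of 𝒟_Λ := {λ : Λ(λ) < +∞}. Let Λ*(x) := sup_{λ∈ℝ^d} (⟨λ,x⟩ − Λ(λ)) be the Fenchel–Legendre transform of Λ, and let ℱ be the set of exposed points of Λ* whose exposing hyperplane belongs to the interior of 𝒟_Λ. Then: (a) for every closed F ⊆ ℝ^d, liminf_{n→∞} −(1/n) log μ_n(F) ≥ inf_{x∈F} Λ*(x); (b) for every open G ⊆ ℝ^d, limsup_{n→∞} −(1/n) log μ_n(G) ≤ inf_{x∈G∩ℱ} Λ*(x). -/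
open MeasureTheory Filter Topology
open scoped ENNReal NNReal Classical

/-- The logarithmic moment generating function `Λ_μ(l) = log ∫ e^{⟨l,z⟩} dμ(z)`,
as an extended real number. -/
noncomputable def logMGF {d : ℕ} (μ : Measure (Fin d → ℝ)) (l : Fin d → ℝ) : EReal :=
  ENNReal.log (∫⁻ z, ENNReal.ofReal (Real.exp (∑ j, l j * z j)) ∂μ)


/-!
Upper bound: if `Λ*(x) > t`, some `l` with `Λ(l) < M` has `t + M < ⟨l, x⟩`, and on the open
halfspace `{z | t + M < ⟨l, z⟩}` the exponential Chebyshev inequality gives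
`μₙ ≤ e^{-nt + o(n)}`. As `Λ` is finite near `0`, finitely many such halfspaces cover the
complement of a large cube, and by compactness finitely many more cover the rest of a closed `F`.

Lower bound: tilt `μₙ` by `e^{n⟨l, z⟩}`, where `l` exposes `y`. The tilted laws have limiting
log-MGF `Λ(· + l) - Λ(l)`, whose transform is positive away from `y`; by the upper bound they
eventually put mass at least `1/2` near `y`, and undoing the tilt there costs
`e^{-n(⟨l, y⟩ - Λ(l)) + o(n)}`, while `⟨l, y⟩ - Λ(l) ≤ Λ*(y)`.
-/

open Matrix

section LogScale

lemma coe_inv_mul_log_le_iff {c : ℝ} (hc : 0 < c) {p : ℝ≥0∞} {M : ℝ} :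
    ((c⁻¹ : ℝ) : EReal) * ENNReal.log p ≤ M ↔ p ≤ EReal.exp (c * M : ℝ) := by
  rw [EReal.coe_inv, ← EReal.div_eq_inv_mul,
    EReal.div_le_iff_le_mul (by exact_mod_cast hc) (EReal.coe_ne_top c), ← EReal.log_exp (_ * _),
    ENNReal.log_le_log_iff, EReal.coe_mul]

lemma le_coe_inv_mul_log_iff {c : ℝ} (hc : 0 < c) {p : ℝ≥0∞} {M : ℝ} :
    (M : EReal) ≤ ((c⁻¹ : ℝ) : EReal) * ENNReal.log p ↔ EReal.exp (c * M : ℝ) ≤ p := by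
  rw [EReal.coe_inv, ← EReal.div_eq_inv_mul,
    EReal.le_div_iff_mul_le (by exact_mod_cast hc) (EReal.coe_ne_top c), ← EReal.log_exp (_ * _),
    ENNReal.log_le_log_iff, EReal.coe_mul, mul_comm]

lemma exp_coe_neg_mul_exp_coe (x : ℝ) : EReal.exp (-x : ℝ) * EReal.exp x = 1 := by
  rw [← EReal.exp_add, ← EReal.coe_add, neg_add_cancel, EReal.coe_zero, EReal.exp_zero]

lemma le_liminf_negLogRate {u : ℕ → ℝ≥0∞} {t : ℝ}
    (h : ∀ᶠ n : ℕ in atTop, u n ≤ EReal.exp (-(n * t) : ℝ)) :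
    (t : EReal) ≤ liminf (fun n => negLogRate n (u n)) atTop := by
  refine le_liminf_of_le (by isBoundedDefault) ?_
  filter_upwards [h, eventually_gt_atTop 0] with n hn hpos
  rw [negLogRate, EReal.neg_mul, EReal.le_neg, ← EReal.coe_neg,
    coe_inv_mul_log_le_iff (by exact_mod_cast hpos), mul_neg]
  exact hn

lemma limsup_negLogRate_le {u : ℕ → ℝ≥0∞} {t : ℝ}
    (h : ∀ᶠ n : ℕ in atTop, EReal.exp (-(n * t) : ℝ) ≤ u n) :
    limsup (fun n => negLogRate n (u n)) atTop ≤ t := by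
  refine limsup_le_of_le (by isBoundedDefault) ?_
  filter_upwards [h, eventually_gt_atTop 0] with n hn hpos
  rw [negLogRate, EReal.neg_mul, EReal.neg_le, ← EReal.coe_neg,
    le_coe_inv_mul_log_iff (by exact_mod_cast hpos), mul_neg]
  exact hn

lemma eventually_exp_neg_mul_le_inv_two {γ : ℝ} (hγ : 0 < γ) :
    ∀ᶠ n : ℕ in atTop, EReal.exp (-(n * γ) : ℝ) ≤ 2⁻¹ := by
  have hlim : Tendsto (fun n : ℕ => EReal.exp (-(n * γ) : ℝ)) atTop (𝓝 0) := by
    simp only [EReal.exp_coe]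
    rw [← ENNReal.ofReal_zero]
    refine ENNReal.tendsto_ofReal (Real.tendsto_exp_atBot.comp ?_)
    exact tendsto_neg_atTop_atBot.comp (tendsto_natCast_atTop_atTop.atTop_mul_const hγ)
  exact hlim.eventually_le_const (by norm_num)

end LogScale

section FenchelLegendre

variable {ι : Type*} [Fintype ι] {Λ : (ι → ℝ) → EReal} {t : ℝ}

noncomputable def fenchelLegendre (Λ : (ι → ℝ) → EReal) (x : ι → ℝ) : EReal :=
  ⨆ l, ((l ⬝ᵥ x : ℝ) : EReal) - Λ l

lemma coe_dotProduct_sub_le_fenchelLegendre (Λ : (ι → ℝ) → EReal) (l x : ι → ℝ) :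
    ((l ⬝ᵥ x : ℝ) : EReal) - Λ l ≤ fenchelLegendre Λ x :=
  le_iSup (fun l => ((l ⬝ᵥ x : ℝ) : EReal) - Λ l) l

def chernoffHalfspaces (Λ : (ι → ℝ) → EReal) (t : ℝ) : Set (Set (ι → ℝ)) :=
  {H | ∃ l, ∃ M : ℝ, Λ l < M ∧ H = {z | t + M < l ⬝ᵥ z}}

lemma isOpen_of_mem_chernoffHalfspaces {H : Set (ι → ℝ)} (hH : H ∈ chernoffHalfspaces Λ t) :
    IsOpen H := by
  obtain ⟨l, M, -, rfl⟩ := hH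
  exact isOpen_lt continuous_const (continuous_const.dotProduct continuous_id)

lemma lt_fenchelLegendre_of_mem_chernoffHalfspaces {H : Set (ι → ℝ)}
    (hH : H ∈ chernoffHalfspaces Λ t) {z : ι → ℝ} (hz : z ∈ H) :
    (t : EReal) < fenchelLegendre Λ z := by
  obtain ⟨l, M, hM, rfl⟩ := hH
  calc (t : EReal) < ((l ⬝ᵥ z - M : ℝ) : EReal) := by exact_mod_cast lt_sub_iff_add_lt.2 hz
    _ ≤ ((l ⬝ᵥ z : ℝ) : EReal) - Λ l := by rw [EReal.coe_sub]; exact EReal.sub_le_sub le_rfl hM.le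
    _ ≤ fenchelLegendre Λ z := coe_dotProduct_sub_le_fenchelLegendre Λ l z

lemma exists_mem_chernoffHalfspaces {x : ι → ℝ} (hx : (t : EReal) < fenchelLegendre Λ x) :
    ∃ H ∈ chernoffHalfspaces Λ t, x ∈ H := by
  obtain ⟨l, hl⟩ := lt_iSup_iff.1 hx
  have hlt : Λ l < ((l ⬝ᵥ x - t : ℝ) : EReal) := by
    rw [EReal.lt_sub_iff_add_lt (.inr (EReal.coe_ne_top _)) (.inr (EReal.coe_ne_bot _)),
      add_comm] at hl
    rw [EReal.coe_sub, EReal.lt_sub_iff_add_lt (.inl (EReal.coe_ne_bot _))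
      (.inl (EReal.coe_ne_top _))]
    exact hl
  obtain ⟨M, hΛM, hM⟩ := EReal.exists_between_coe_real hlt
  refine ⟨_, ⟨l, M, hΛM, rfl⟩, ?_⟩
  have : M < l ⬝ᵥ x - t := by exact_mod_cast hM
  show t + M < l ⬝ᵥ x
  linarith

lemma lowerSemicontinuous_fenchelLegendre : LowerSemicontinuous (fenchelLegendre Λ) := by
  intro x y hy
  obtain ⟨s, hys, hs⟩ := EReal.exists_between_coe_real hy
  obtain ⟨H, hH, hxH⟩ := exists_mem_chernoffHalfspaces hs
  filter_upwards [(isOpen_of_mem_chernoffHalfspaces hH).mem_nhds hxH] with z hz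
  exact hys.trans (lt_fenchelLegendre_of_mem_chernoffHalfspaces hH hz)

/-- The directions `±(ε/2) eᵢ`, on which `Λ` is finite, control every coordinate. -/
lemma exists_chernoffHalfspaces_cover_compl_closedBall (h0 : 0 ∈ interior {l | Λ l < ⊤})
    (t : ℝ) : ∃ ρ : ℝ, ∃ 𝒮 : Set (Set (ι → ℝ)), 𝒮.Finite ∧ 𝒮 ⊆ chernoffHalfspaces Λ t ∧
      (Metric.closedBall 0 ρ)ᶜ ⊆ ⋃₀ 𝒮 := by
  obtain ⟨ε, hε, hball⟩ := Metric.mem_nhds_iff.1 (mem_interior_iff_mem_nhds.1 h0)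
  set r := ε / 2
  have hr0 : 0 < r := half_pos hε
  let dir : ι × Bool → ι → ℝ := fun i => Pi.single i.1 (if i.2 then r else -r)
  have hdir : ∀ i, Λ (dir i) < ⊤ := fun i => hball <| by
    have habs : |if i.2 then r else -r| = r := by split_ifs <;> simp [abs_of_pos hr0]
    rw [mem_ball_zero_iff, Pi.norm_single, Real.norm_eq_abs, habs]
    exact half_lt_self hε
  choose M' hM' using fun i => EReal.exists_between_coe_real (hdir i)
  obtain ⟨M, hM⟩ := Finite.exists_le fun i => M' i
  refine ⟨|t + M| / r, Set.range fun i => {z | t + M < dir i ⬝ᵥ z}, Set.finite_range _, ?_, ?_⟩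
  · rintro _ ⟨i, rfl⟩
    exact ⟨dir i, M, (hM' i).1.trans_le (by exact_mod_cast hM i), rfl⟩
  · intro z hz
    rw [Set.mem_compl_iff, mem_closedBall_zero_iff, pi_norm_le_iff_of_nonneg (by positivity)] at hz
    obtain ⟨j, hj⟩ := not_forall.1 hz
    rw [not_le, Real.norm_eq_abs] at hj
    have htM := le_abs_self (t + M)
    rcases lt_abs.1 hj with hj | hj <;> rw [div_lt_iff₀' hr0] at hj
    · refine Set.mem_sUnion.2 ⟨_, ⟨(j, true), rfl⟩, ?_⟩
      simp only [dir, Set.mem_ofPred_eq, single_dotProduct, if_true]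
      linarith
    · refine Set.mem_sUnion.2 ⟨_, ⟨(j, false), rfl⟩, ?_⟩
      simp only [dir, Set.mem_ofPred_eq, single_dotProduct, Bool.false_eq_true, if_false]
      linarith

lemma exists_chernoffHalfspaces_cover (h0 : 0 ∈ interior {l | Λ l < ⊤}) {F : Set (ι → ℝ)}
    (hF : IsClosed F) (hFt : ∀ x ∈ F, (t : EReal) < fenchelLegendre Λ x) :
    ∃ 𝒮 : Set (Set (ι → ℝ)), 𝒮.Finite ∧ 𝒮 ⊆ chernoffHalfspaces Λ t ∧ F ⊆ ⋃₀ 𝒮 := by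
  obtain ⟨ρ, 𝒮₁, h𝒮₁, h𝒮₁t, hcompl⟩ := exists_chernoffHalfspaces_cover_compl_closedBall h0 t
  have hcover : F ∩ Metric.closedBall 0 ρ ⊆ ⋃ H ∈ chernoffHalfspaces Λ t, H := fun x hx =>
    let ⟨H, hH, hxH⟩ := exists_mem_chernoffHalfspaces (hFt x hx.1)
    Set.mem_iUnion₂.2 ⟨H, hH, hxH⟩
  obtain ⟨𝒮₂, h𝒮₂t, h𝒮₂, hK⟩ :=
    ((isCompact_closedBall 0 ρ).inter_left hF).elim_finite_subcover_image
      (fun _ => isOpen_of_mem_chernoffHalfspaces) hcover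
  refine ⟨𝒮₁ ∪ 𝒮₂, h𝒮₁.union h𝒮₂, Set.union_subset h𝒮₁t h𝒮₂t, fun x hx => ?_⟩
  rw [Set.sUnion_union]
  by_cases hxK : x ∈ Metric.closedBall 0 ρ
  · exact Or.inr (Set.sUnion_eq_biUnion ▸ hK ⟨hx, hxK⟩)
  · exact Or.inl (hcompl hxK)

lemma exists_pos_forall_lt_fenchelLegendre (h0 : 0 ∈ interior {l | Λ l < ⊤})
    {C : Set (ι → ℝ)} (hC : IsClosed C) (hpos : ∀ z ∈ C, 0 < fenchelLegendre Λ z) :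
    ∃ s : ℝ, 0 < s ∧ ∀ z ∈ C, (s : EReal) < fenchelLegendre Λ z := by
  obtain ⟨ρ, 𝒮, -, h𝒮, hcompl⟩ := exists_chernoffHalfspaces_cover_compl_closedBall h0 1
  have hfar : ∀ z ∉ Metric.closedBall (0 : ι → ℝ) ρ, (1 : EReal) < fenchelLegendre Λ z := by
    intro z hz
    obtain ⟨H, hH, hzH⟩ := hcompl hz
    exact_mod_cast lt_fenchelLegendre_of_mem_chernoffHalfspaces (h𝒮 hH) hzH
  set K := C ∩ Metric.closedBall 0 ρ
  rcases K.eq_empty_or_nonempty with hK | hK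
  · refine ⟨1, one_pos, fun z hz => hfar z fun hzB => ?_⟩
    exact (Set.eq_empty_iff_forall_notMem.1 hK) z ⟨hz, hzB⟩
  obtain ⟨z₀, hz₀, hmin⟩ := LowerSemicontinuousOn.exists_isMinOn hK
    ((isCompact_closedBall 0 ρ).inter_left hC)
    (lowerSemicontinuous_fenchelLegendre.lowerSemicontinuousOn _)
  obtain ⟨s, hs0, hs⟩ := EReal.exists_between_coe_real (hpos z₀ hz₀.1)
  refine ⟨min s 1, lt_min (by exact_mod_cast hs0) one_pos, fun z hz => ?_⟩
  by_cases hzB : z ∈ Metric.closedBall 0 ρ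
  · calc ((min s 1 : ℝ) : EReal) ≤ s := by exact_mod_cast min_le_left s 1
      _ < fenchelLegendre Λ z₀ := hs
      _ ≤ fenchelLegendre Λ z := hmin ⟨hz, hzB⟩
  · exact lt_of_le_of_lt (by exact_mod_cast min_le_right s 1) (hfar z hzB)

lemma zero_lt_fenchelLegendre_tilt {l z : ι → ℝ} {c : ℝ}
    (h : ((l ⬝ᵥ z : ℝ) : EReal) - fenchelLegendre Λ z < c) :
    0 < fenchelLegendre (fun θ => Λ (θ + l) - c) z := by
  obtain ⟨θ, hθ⟩ := lt_iSup_iff.1 (EReal.sub_lt_of_lt_add' <|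
    (EReal.sub_lt_iff (.inr (EReal.coe_ne_bot _)) (.inr (EReal.coe_ne_top _))).1 h)
  refine lt_of_lt_of_le ?_ (coe_dotProduct_sub_le_fenchelLegendre _ (θ - l) z)
  rw [sub_add_cancel, sub_dotProduct]
  generalize Λ θ = X at hθ ⊢
  induction X using EReal.rec with
  | bot => simp [-EReal.coe_sub]
  | top => simp at hθ
  | coe x =>
    norm_cast at hθ ⊢
    linarith

end FenchelLegendre

section Chernoff

lemma measure_le_exp_neg_mul_lintegral_exp {α : Type*} [MeasurableSpace α] (μ : Measure α)
    {f : α → ℝ} (hf : Measurable f) {S : Set α} {s : ℝ} (hS : S ⊆ {x | s ≤ f x}) :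
    μ S ≤ EReal.exp (-s : ℝ) * ∫⁻ x, ENNReal.ofReal (Real.exp (f x)) ∂μ := by
  have hmarkov : EReal.exp s * μ S ≤ ∫⁻ x, ENNReal.ofReal (Real.exp (f x)) ∂μ := by
    refine le_trans ?_ (mul_meas_ge_le_lintegral₀ (by fun_prop) (EReal.exp s))
    gcongr
    intro x hx
    exact ENNReal.ofReal_le_ofReal (Real.exp_le_exp.2 (hS hx))
  calc μ S = EReal.exp (-s : ℝ) * (EReal.exp s * μ S) := by
        rw [← mul_assoc, exp_coe_neg_mul_exp_coe, one_mul]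
    _ ≤ _ := by gcongr

lemma eventually_measure_sUnion_le {α : Type*} [MeasurableSpace α] {μ : ℕ → Measure α}
    {𝒮 : Set (Set α)} (h𝒮 : 𝒮.Finite) {t t' : ℝ} (htt' : t < t')
    (h : ∀ H ∈ 𝒮, ∀ᶠ n : ℕ in atTop, μ n H ≤ EReal.exp (-(n * t') : ℝ)) :
    ∀ᶠ n : ℕ in atTop, μ n (⋃₀ 𝒮) ≤ EReal.exp (-(n * t) : ℝ) := by
  have hcard : ∀ᶠ n : ℕ in atTop, (h𝒮.toFinset.card : ℝ) ≤ Real.exp (n * (t' - t)) :=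
    (Real.tendsto_exp_atTop.comp
      (tendsto_natCast_atTop_atTop.atTop_mul_const (sub_pos.2 htt'))).eventually_ge_atTop _
  filter_upwards [(eventually_all_finite h𝒮).2 h, hcard] with n hH hn
  calc μ n (⋃₀ 𝒮) = μ n (⋃ H ∈ h𝒮.toFinset, H) := by simp [Set.sUnion_eq_biUnion]
    _ ≤ ∑ H ∈ h𝒮.toFinset, μ n H := measure_biUnion_finset_le _ _
    _ ≤ ∑ _H ∈ h𝒮.toFinset, EReal.exp (-(n * t') : ℝ) :=
        Finset.sum_le_sum fun H hH' => hH H (h𝒮.mem_toFinset.1 hH')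
    _ = ENNReal.ofReal h𝒮.toFinset.card * EReal.exp (-(n * t') : ℝ) := by
        rw [Finset.sum_const, nsmul_eq_mul, ENNReal.ofReal_natCast]
    _ ≤ EReal.exp (n * (t' - t) : ℝ) * EReal.exp (-(n * t') : ℝ) := by
        gcongr
        exact ENNReal.ofReal_le_ofReal hn
    _ = EReal.exp (-(n * t) : ℝ) := by
        rw [← EReal.exp_add, ← EReal.coe_add]
        ring_nf

end Chernoff

section ExpMoment

variable {ι : Type*} [Fintype ι]

noncomputable def expMoment (μ : Measure (ι → ℝ)) (l : ι → ℝ) : ℝ≥0∞ :=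
  ∫⁻ z, ENNReal.ofReal (Real.exp (l ⬝ᵥ z)) ∂μ

lemma measurable_ofReal_exp_dotProduct (l : ι → ℝ) :
    Measurable fun z : ι → ℝ => ENNReal.ofReal (Real.exp (l ⬝ᵥ z)) :=
  (continuous_const.dotProduct continuous_id).measurable.exp.ennreal_ofReal

noncomputable def expTilt (μ : Measure (ι → ℝ)) (l : ι → ℝ) : Measure (ι → ℝ) :=
  (expMoment μ l)⁻¹ • μ.withDensity fun z => ENNReal.ofReal (Real.exp (l ⬝ᵥ z))

lemma expMoment_expTilt (μ : Measure (ι → ℝ)) (l θ : ι → ℝ) :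
    expMoment (expTilt μ l) θ = (expMoment μ l)⁻¹ * expMoment μ (θ + l) := by
  rw [expMoment, expTilt, lintegral_smul_measure, lintegral_withDensity_eq_lintegral_mul _
    (measurable_ofReal_exp_dotProduct l) (measurable_ofReal_exp_dotProduct θ), smul_eq_mul]
  congr 1
  refine lintegral_congr fun z => ?_
  rw [Pi.mul_apply, ← ENNReal.ofReal_mul (Real.exp_nonneg _), ← Real.exp_add, add_dotProduct,
    add_comm]

lemma expMoment_ne_zero {μ : Measure (ι → ℝ)} (hμ : μ ≠ 0) (l : ι → ℝ) : expMoment μ l ≠ 0 := by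
  intro h
  rw [expMoment, lintegral_eq_zero_iff (measurable_ofReal_exp_dotProduct l)] at h
  have hae : ∀ᵐ z ∂μ, False :=
    h.mono fun z hz => (Real.exp_pos _).not_ge (ENNReal.ofReal_eq_zero.1 hz)
  exact hμ (ae_eq_bot.1 (by simpa using hae))

lemma isProbabilityMeasure_expTilt {μ : Measure (ι → ℝ)} {l : ι → ℝ} (h0 : expMoment μ l ≠ 0)
    (htop : expMoment μ l ≠ ⊤) : IsProbabilityMeasure (expTilt μ l) := by
  constructor
  have h := expMoment_expTilt μ l 0
  rw [zero_add, ENNReal.inv_mul_cancel h0 htop] at h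
  simpa [expMoment] using h

lemma expMoment_mul_expTilt_le (μ : Measure (ι → ℝ)) {l : ι → ℝ} {B : Set (ι → ℝ)}
    (hB : MeasurableSet B) {a : ℝ} (ha : ∀ z ∈ B, l ⬝ᵥ z ≤ a) :
    expMoment μ l * expTilt μ l B ≤ EReal.exp a * μ B := by
  rw [expTilt, Measure.smul_apply, withDensity_apply _ hB, smul_eq_mul, ← mul_assoc]
  calc expMoment μ l * (expMoment μ l)⁻¹ * ∫⁻ z in B, ENNReal.ofReal (Real.exp (l ⬝ᵥ z)) ∂μ
      ≤ ∫⁻ z in B, ENNReal.ofReal (Real.exp (l ⬝ᵥ z)) ∂μ :=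
        mul_le_of_le_one_left' (ENNReal.mul_inv_le_one _)
    _ ≤ ∫⁻ _ in B, EReal.exp a ∂μ :=
        setLIntegral_mono' hB fun z hz => ENNReal.ofReal_le_ofReal (Real.exp_le_exp.2 (ha z hz))
    _ = EReal.exp a * μ B := setLIntegral_const _ _

end ExpMoment

section LimitingLogMGF

variable {ι : Type*} [Fintype ι]

def IsLimitingLogMGF (μ : ℕ → Measure (ι → ℝ)) (Λ : (ι → ℝ) → EReal) : Prop :=
  ∀ l, Tendsto
    (fun n : ℕ => (((n : ℝ)⁻¹ : ℝ) : EReal) * ENNReal.log (expMoment (μ n) ((n : ℝ) • l)))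
    atTop (𝓝 (Λ l))

namespace IsLimitingLogMGF

variable {μ : ℕ → Measure (ι → ℝ)} {Λ : (ι → ℝ) → EReal}

lemma eventually_expMoment_le (hΛ : IsLimitingLogMGF μ Λ) {l : ι → ℝ} {M : ℝ} (h : Λ l < M) :
    ∀ᶠ n : ℕ in atTop, expMoment (μ n) ((n : ℝ) • l) ≤ EReal.exp (n * M : ℝ) := by
  filter_upwards [(hΛ l).eventually_le_const h, eventually_gt_atTop 0] with n hn hpos
  exact (coe_inv_mul_log_le_iff (by exact_mod_cast hpos)).1 hn

lemma eventually_exp_le_expMoment (hΛ : IsLimitingLogMGF μ Λ) {l : ι → ℝ} {m : ℝ} (h : m < Λ l) :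
    ∀ᶠ n : ℕ in atTop, EReal.exp (n * m : ℝ) ≤ expMoment (μ n) ((n : ℝ) • l) := by
  filter_upwards [(hΛ l).eventually_const_le h, eventually_gt_atTop 0] with n hn hpos
  exact (le_coe_inv_mul_log_iff (by exact_mod_cast hpos)).1 hn

lemma eventually_measure_le_of_mem_chernoffHalfspaces (hΛ : IsLimitingLogMGF μ Λ) {t : ℝ}
    {H : Set (ι → ℝ)} (hH : H ∈ chernoffHalfspaces Λ t) :
    ∀ᶠ n : ℕ in atTop, μ n H ≤ EReal.exp (-(n * t) : ℝ) := by
  obtain ⟨l, M, hM, rfl⟩ := hH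
  filter_upwards [hΛ.eventually_expMoment_le hM] with n hn
  have hsub : {z | t + M < l ⬝ᵥ z} ⊆ {z | n * (t + M) ≤ ((n : ℝ) • l) ⬝ᵥ z} := fun z hz => by
    rw [Set.mem_ofPred_eq, smul_dotProduct, smul_eq_mul]
    exact mul_le_mul_of_nonneg_left (le_of_lt hz) n.cast_nonneg
  calc μ n {z | t + M < l ⬝ᵥ z}
      ≤ EReal.exp (-(n * (t + M)) : ℝ) * expMoment (μ n) ((n : ℝ) • l) :=
        measure_le_exp_neg_mul_lintegral_exp _
          (continuous_const.dotProduct continuous_id).measurable hsub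
    _ ≤ EReal.exp (-(n * (t + M)) : ℝ) * EReal.exp (n * M : ℝ) := by gcongr
    _ = EReal.exp (-(n * t) : ℝ) := by
        rw [← EReal.exp_add, ← EReal.coe_add]
        ring_nf

lemma eventually_measure_le_of_isClosed (hΛ : IsLimitingLogMGF μ Λ)
    (h0 : 0 ∈ interior {l | Λ l < ⊤}) {F : Set (ι → ℝ)} (hF : IsClosed F) {t t' : ℝ}
    (htt' : t < t') (hFt : ∀ x ∈ F, (t' : EReal) < fenchelLegendre Λ x) :
    ∀ᶠ n : ℕ in atTop, μ n F ≤ EReal.exp (-(n * t) : ℝ) := by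
  obtain ⟨𝒮, h𝒮, h𝒮t, hF𝒮⟩ := exists_chernoffHalfspaces_cover h0 hF hFt
  filter_upwards [eventually_measure_sUnion_le h𝒮 htt'
    fun H hH => hΛ.eventually_measure_le_of_mem_chernoffHalfspaces (h𝒮t hH)] with n hn
  exact (measure_mono hF𝒮).trans hn

theorem iInf_fenchelLegendre_le_liminf (hΛ : IsLimitingLogMGF μ Λ)
    (h0 : 0 ∈ interior {l | Λ l < ⊤}) {F : Set (ι → ℝ)} (hF : IsClosed F) :
    (⨅ x ∈ F, fenchelLegendre Λ x) ≤ liminf (fun n : ℕ => negLogRate n (μ n F)) atTop := by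
  refine EReal.ge_of_forall_gt_iff_ge.1 fun t ht => ?_
  obtain ⟨t', htt', ht'⟩ := EReal.exists_between_coe_real ht
  exact le_liminf_negLogRate <| hΛ.eventually_measure_le_of_isClosed h0 hF
    (by exact_mod_cast htt') fun x hx => ht'.trans_le (iInf₂_le x hx)

lemma tilt (hΛ : IsLimitingLogMGF μ Λ) {l : ι → ℝ} {c : ℝ} (hc : Λ l = c) :
    IsLimitingLogMGF (fun n => expTilt (μ n) ((n : ℝ) • l)) fun θ => Λ (θ + l) - c := by
  intro θ
  have hadd : ContinuousAt (fun p : EReal × EReal => p.1 + p.2) (Λ (θ + l), -c) :=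
    EReal.continuousAt_add (.inr (EReal.coe_ne_bot _)) (.inr (EReal.coe_ne_top _))
  refine (hadd.tendsto.comp ((hΛ (θ + l)).prodMk_nhds (hc ▸ hΛ l).neg)).congr fun n => ?_
  simp only [Function.comp_apply, expMoment_expTilt, ← smul_add, ENNReal.log_mul_add,
    ENNReal.log_inv]
  rw [EReal.left_distrib_of_nonneg_of_ne_top (by positivity) (EReal.coe_ne_top _), mul_neg,
    add_comm]

lemma eventually_inv_two_le_expTilt (hμ : ∀ n, μ n ≠ 0) (hΛ : IsLimitingLogMGF μ Λ)
    {l y : ι → ℝ} (hl : l ∈ interior {l | Λ l < ⊤}) {c : ℝ} (hc : Λ l = c)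
    (hpos : ∀ z ≠ y, 0 < fenchelLegendre (fun θ => Λ (θ + l) - c) z) {B : Set (ι → ℝ)}
    (hB : IsOpen B) (hyB : y ∈ B) :
    ∀ᶠ n : ℕ in atTop, 2⁻¹ ≤ expTilt (μ n) ((n : ℝ) • l) B := by
  have h0 : (0 : ι → ℝ) ∈ interior {θ | Λ (θ + l) - c < ⊤} :=
    interior_mono (fun θ (hθ : Λ (θ + l) < ⊤) => EReal.add_lt_top hθ.ne (EReal.coe_ne_top _))
      (preimage_interior_subset_interior_preimage (continuous_add_const l)
        (show (0 : ι → ℝ) + l ∈ interior {l | Λ l < ⊤} by rwa [zero_add]))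
  obtain ⟨s, hs, hBs⟩ := exists_pos_forall_lt_fenchelLegendre h0 hB.isClosed_compl
    fun z hz => hpos z fun hzy => hz (hzy ▸ hyB)
  have hfin : ∀ᶠ n : ℕ in atTop, expMoment (μ n) ((n : ℝ) • l) ≠ ⊤ :=
    (hΛ.eventually_expMoment_le (M := c + 1) (by rw [hc]; exact_mod_cast lt_add_one c)).mono
      fun n hn => ne_top_of_le_ne_top ENNReal.ofReal_ne_top hn
  filter_upwards [(hΛ.tilt hc).eventually_measure_le_of_isClosed h0 hB.isClosed_compl
    (half_lt_self hs) hBs, eventually_exp_neg_mul_le_inv_two (half_pos hs), hfin]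
    with n hsmall hhalf hn
  have := isProbabilityMeasure_expTilt (expMoment_ne_zero (hμ n) _) hn
  have hcompl := prob_compl_eq_one_sub (μ := expTilt (μ n) ((n : ℝ) • l))
    hB.isClosed_compl.measurableSet
  rw [compl_compl] at hcompl
  rw [hcompl, ← ENNReal.one_sub_inv_two]
  exact tsub_le_tsub_left (hsmall.trans hhalf) 1

theorem limsup_negLogRate_le_dotProduct_sub (hμ : ∀ n, μ n ≠ 0) (hΛ : IsLimitingLogMGF μ Λ)
    {G : Set (ι → ℝ)} (hG : IsOpen G) {y l : ι → ℝ} (hyG : y ∈ G)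
    (hl : l ∈ interior {l | Λ l < ⊤}) {c : ℝ} (hc : Λ l = c)
    (hpos : ∀ z ≠ y, 0 < fenchelLegendre (fun θ => Λ (θ + l) - c) z) :
    limsup (fun n : ℕ => negLogRate n (μ n G)) atTop ≤ ((l ⬝ᵥ y - c : ℝ) : EReal) := by
  refine EReal.le_of_forall_lt_iff_le.1 fun u hu => ?_
  have hu' : l ⬝ᵥ y - c < u := by exact_mod_cast hu
  -- the margin `u - (⟨l, y⟩ - c)` is spent in three equal parts: on the window `B` around `y`,
  -- on the normalising constant of the tilt, and on the factor `1/2`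
  set η := (u - (l ⬝ᵥ y - c)) / 3 with hη
  have hη0 : 0 < η := by positivity
  set B := G ∩ {z | l ⬝ᵥ z < l ⬝ᵥ y + η}
  have hB : IsOpen B :=
    hG.inter (isOpen_lt (continuous_const.dotProduct continuous_id) continuous_const)
  refine limsup_negLogRate_le ?_
  filter_upwards
    [hΛ.eventually_inv_two_le_expTilt hμ hl hc hpos hB ⟨hyG, lt_add_of_pos_right _ hη0⟩,
    hΛ.eventually_exp_le_expMoment (m := c - η) (by rw [hc]; exact_mod_cast sub_lt_self c hη0),
    eventually_exp_neg_mul_le_inv_two hη0] with n hhalf hA hsmall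
  calc EReal.exp (-(n * u) : ℝ)
      = EReal.exp (-(n * (l ⬝ᵥ y + η)) : ℝ) *
          (EReal.exp (n * (c - η) : ℝ) * EReal.exp (-(n * η) : ℝ)) := by
        rw [← EReal.exp_add, ← EReal.exp_add, ← EReal.coe_add, ← EReal.coe_add, hη]
        ring_nf
    _ ≤ EReal.exp (-(n * (l ⬝ᵥ y + η)) : ℝ) *
          (expMoment (μ n) ((n : ℝ) • l) * expTilt (μ n) ((n : ℝ) • l) B) := by
        gcongr
        exact hsmall.trans hhalf
    _ ≤ EReal.exp (-(n * (l ⬝ᵥ y + η)) : ℝ) * (EReal.exp (n * (l ⬝ᵥ y + η) : ℝ) * μ n B) := by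
        refine mul_le_mul_right (expMoment_mul_expTilt_le _ hB.measurableSet fun z hz => ?_) _
        rw [smul_dotProduct, smul_eq_mul]
        exact mul_le_mul_of_nonneg_left hz.2.le n.cast_nonneg
    _ = μ n B := by rw [← mul_assoc, exp_coe_neg_mul_exp_coe, one_mul]
    _ ≤ μ n G := measure_mono Set.inter_subset_left

theorem limsup_negLogRate_le_of_exposed (hμ : ∀ n, μ n ≠ 0) (hΛ : IsLimitingLogMGF μ Λ)
    {G : Set (ι → ℝ)} (hG : IsOpen G) {y l : ι → ℝ} (hyG : y ∈ G)
    (hl : l ∈ interior {l | Λ l < ⊤})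
    (hexp : ∀ x ≠ y, ((l ⬝ᵥ x : ℝ) : EReal) - fenchelLegendre Λ x
      < ((l ⬝ᵥ y : ℝ) : EReal) - fenchelLegendre Λ y) :
    limsup (fun n : ℕ => negLogRate n (μ n G)) atTop ≤ fenchelLegendre Λ y := by
  have hy := coe_dotProduct_sub_le_fenchelLegendre Λ l y
  obtain hbot | hbot := eq_bot_or_bot_lt (Λ l)
  · rw [hbot, EReal.coe_sub_bot, top_le_iff] at hy
    exact hy ▸ le_top
  have hltop : Λ l < ⊤ := interior_subset (s := {l | Λ l < ⊤}) hl
  obtain ⟨c, hc⟩ : ∃ c : ℝ, Λ l = c := ⟨_, (EReal.coe_toReal hltop.ne hbot.ne').symm⟩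
  rw [hc, ← EReal.coe_sub] at hy
  refine (hΛ.limsup_negLogRate_le_dotProduct_sub hμ hG hyG hl hc fun z hz => ?_).trans hy
  refine zero_lt_fenchelLegendre_tilt <| (hexp z hz).trans_le ?_
  calc ((l ⬝ᵥ y : ℝ) : EReal) - fenchelLegendre Λ y
      ≤ ((l ⬝ᵥ y : ℝ) : EReal) - ((l ⬝ᵥ y - c : ℝ) : EReal) := EReal.sub_le_sub le_rfl hy
    _ = c := by norm_cast; ring

end IsLimitingLogMGF

end LimitingLogMGF

/-- **Gärtner–Ellis theorem.** Let `Z_n` have laws `μ_n` on `ℝ^d`, suppose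
`Λ(l) = lim_n (1/n) Λ_n(n l)` exists as an extended real for each `l`, and `0` lies in the
interior of `𝒟_Λ = {l : Λ l < ∞}`. With `Λ*` the Fenchel–Legendre transform of `Λ` and `ℱ`
the set of exposed points of `Λ*` with exposing hyperplane in `int 𝒟_Λ`:
(a) lower bound on closed sets with rate `Λ*`; (b) upper bound on open sets, restricted
to `ℱ`. -/
theorem gartner_ellis {d : ℕ} (μ : ℕ → Measure (Fin d → ℝ))
    (hprob : ∀ n, IsProbabilityMeasure (μ n))
    (Λ : (Fin d → ℝ) → EReal)
    (hΛ : ∀ l : Fin d → ℝ,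
      Tendsto (fun n : ℕ => ((((n : ℝ)⁻¹ : ℝ)) : EReal) * logMGF (μ n) ((n : ℝ) • l))
        atTop (𝓝 (Λ l)))
    (h0 : (0 : Fin d → ℝ) ∈ interior {l | Λ l < ⊤})
    (Λstar : (Fin d → ℝ) → EReal)
    (hΛstar : ∀ x, Λstar x = ⨆ l : Fin d → ℝ, ((∑ j, l j * x j : ℝ) : EReal) - Λ l)
    (ℱ : Set (Fin d → ℝ))
    (hℱ : ℱ = {y | ∃ l ∈ interior {l | Λ l < ⊤}, ∀ x ≠ y,
      ((∑ j, l j * x j : ℝ) : EReal) - Λstar x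
        < ((∑ j, l j * y j : ℝ) : EReal) - Λstar y}) :
    (∀ F : Set (Fin d → ℝ), IsClosed F →
      (⨅ x ∈ F, Λstar x) ≤ liminf (fun n : ℕ => negLogRate n (μ n F)) atTop)
    ∧ (∀ G : Set (Fin d → ℝ), IsOpen G →
      limsup (fun n : ℕ => negLogRate n (μ n G)) atTop ≤ ⨅ x ∈ G ∩ ℱ, Λstar x) := by
  obtain rfl : Λstar = fenchelLegendre Λ := funext hΛstar
  subst hℱ
  have hΛ' : IsLimitingLogMGF μ Λ := hΛ
  refine ⟨fun F hF => hΛ'.iInf_fenchelLegendre_le_liminf h0 hF, fun G hG => ?_⟩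
  refine le_iInf₂ fun y ⟨hyG, l, hl, hexp⟩ => ?_
  exact hΛ'.limsup_negLogRate_le_of_exposed (fun n => (hprob n).ne_zero) hG hyG hl hexp
end

section
/- Let 𝒳 be a metric space. (i) Every closed ball B_{ε]}(P_X) under the Lévy–Prokhorov metric on Borel probability measures on 𝒳 is completely convex: if (𝒵,Σ,Q_Z) is a probability space and Q_{X|Z} is a Markov kernel from 𝒵 to 𝒳 with Q_{X|Z=z} ∈ B_{ε]}(P_X) for every z, then the mixture Q_X = ∫ Q_{X|Z=z} dQ_Z(z) belongs to B_{ε]}(P_X). (ii) If 𝒳 is Polish and Γ is a convex set of Borel probability measures on 𝒳, then Γ ⊆ cconv Γ ⊆ cl Γ, where cconv Γ is the completely convex hull of Γ (the set of all such mixtures of kernels taking values in Γ) and cl Γ is the closure of Γ under the Lévy–Prokhorov metric. -/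
open MeasureTheory Filter Topology Metric
open scoped ENNReal NNReal Classical

universe u

/-- The completely convex hull of a set `Γ` of Borel probability measures: all mixtures
`∫ Q_{X|Z=z} dQ_Z(z)` of Markov kernels whose values lie in `Γ`, over arbitrary probability
spaces `(Z, Σ, Q_Z)`. -/
def cconvHull {X : Type*} [mX : MeasurableSpace X] (Γ : Set (ProbabilityMeasure X)) :
    Set (ProbabilityMeasure X) :=
  {μ | ∃ (Z : Type u) (mZ : MeasurableSpace Z) (QZ : @MeasureTheory.Measure Z mZ)
        (_ : @IsProbabilityMeasure Z mZ QZ) (κ : @ProbabilityTheory.Kernel Z X mZ mX)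
        (_ : @ProbabilityTheory.IsMarkovKernel Z X mZ mX κ),
        (∀ z : Z, ∃ ν ∈ Γ, (ν : Measure X) = κ z) ∧
        (μ : Measure X) = @MeasureTheory.Measure.bind Z X mZ mX QZ (DFunLike.coe κ)}

/-- The canonical identification of probability measures with points of the
Lévy–Prokhorov metric space. -/
def toLP {X : Type*} [MeasurableSpace X] (μ : ProbabilityMeasure X) :
    LevyProkhorov (ProbabilityMeasure X) :=
  (LevyProkhorov.toMeasureEquiv (α := ProbabilityMeasure X)).symm μ


/-!
(i) The mass a mixture gives to a closed set `B` is the `Q_Z`-average of the masses `κ z B`, so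
the Lévy–Prokhorov inequality `κ z B ≤ P_X (B^δ) + δ`, valid for every component, passes to the
average.

(ii) Constant kernels over a point give `Γ ⊆ cconv Γ`. On a separable space the Lévy–Prokhorov
topology is the weak topology, which is induced by integrating against bounded continuous test
functions; a basic neighbourhood involves only finitely many of them. For a finite family of test
functions, the vector of integrals against a mixture is the `Q_Z`-barycenter of the vectors of its
components. These lie in the image of `Γ`, which is convex in a finite-dimensional space, so the
barycenter lies in its closure.
-/

open ProbabilityTheory BoundedContinuousFunction

theorem levyProkhorovEDist_bind_le {X Z : Type*} [MeasurableSpace X] [PseudoEMetricSpace X]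
    [OpensMeasurableSpace X] [MeasurableSpace Z] {μ : Measure Z} [IsProbabilityMeasure μ]
    {κ : Kernel Z X} [IsMarkovKernel κ] {ν : Measure X} [IsProbabilityMeasure ν] {c : ℝ≥0∞}
    (h : ∀ z, levyProkhorovEDist (κ z) ν ≤ c) : levyProkhorovEDist (μ.bind κ) ν ≤ c := by
  refine levyProkhorovEDist_le_of_forall_le _ _ c fun δ B hδ _ hB => ?_
  rw [Measure.bind_apply hB κ.aemeasurable]
  calc ∫⁻ z, κ z B ∂μ ≤ ∫⁻ _, (ν (thickening δ.toReal B) + δ) ∂μ :=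
        lintegral_mono fun z => left_measure_le_of_levyProkhorovEDist_lt ((h z).trans_lt hδ) hB
    _ = ν (thickening δ.toReal B) + δ := by simp

theorem mem_closure_of_forall_finset_restrict {ι : Type*} {π : ι → Type*}
    [∀ i, TopologicalSpace (π i)] {S : Set (∀ i, π i)} {x : ∀ i, π i}
    (h : ∀ s : Finset ι, s.restrict x ∈ closure (s.restrict '' S)) : x ∈ closure S := by
  refine mem_closure_iff_nhds.2 fun U hU => ?_
  rw [nhds_pi, Filter.mem_pi'] at hU
  obtain ⟨I, t, ht, hIt⟩ := hU
  have hnhds : Set.univ.pi (fun i : I => t i) ∈ 𝓝 (I.restrict x) :=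
    set_pi_mem_nhds Set.finite_univ fun i _ => ht i
  obtain ⟨_, hyt, y, hyS, rfl⟩ := mem_closure_iff_nhds.1 (h I) _ hnhds
  exact ⟨y, hIt fun i hi => hyt ⟨i, hi⟩ trivial, hyS⟩

theorem MeasureTheory.Measure.integral_bind {X Z E : Type*} [MeasurableSpace X] [MeasurableSpace Z]
    [NormedAddCommGroup E] [NormedSpace ℝ E] {μ : Measure Z} [SFinite μ] {κ : Kernel Z X}
    [IsSFiniteKernel κ] {g : X → E} (hg : Integrable g (μ.bind κ)) :
    ∫ x, g x ∂(μ.bind κ) = ∫ z, ∫ x, g x ∂(κ z) ∂μ := by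
  rw [← Measure.snd_compProd] at hg ⊢
  rw [Measure.snd, integral_map measurable_snd.aemeasurable hg.aestronglyMeasurable]
  exact Measure.integral_compProd (hg.comp_measurable measurable_snd)

section TestIntegrals

variable {X : Type*} [MeasurableSpace X] [TopologicalSpace X] [OpensMeasurableSpace X]
  {ι : Type*}

noncomputable def testIntegrals (f : ι → X →ᵇ ℝ≥0) (μ : Measure X) : ι → ℝ :=
  fun i => ∫ x, (f i x : ℝ) ∂μ

theorem ProbabilityMeasure.isInducing_testIntegrals :
    IsInducing fun ν : ProbabilityMeasure X => testIntegrals id (ν : Measure X) := by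
  have hNN : IsInducing fun (ν : ProbabilityMeasure X) (f : X →ᵇ ℝ≥0) =>
      ν.toFiniteMeasure.testAgainstNN f :=
    (IsInducing.mk (f := fun (φ : WeakDual ℝ≥0 (X →ᵇ ℝ≥0)) f => φ f) rfl).comp
      ((IsInducing.mk (f := FiniteMeasure.toWeakDualBCNN) rfl).comp ⟨rfl⟩)
  have hcoe : IsInducing (Pi.map fun (_ : X →ᵇ ℝ≥0) => ((↑) : ℝ≥0 → ℝ)) :=
    .piMap fun _ => NNReal.isEmbedding_coe.isInducing
  convert hcoe.comp hNN with ν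
  funext f
  simp [testIntegrals, FiniteMeasure.testAgainstNN, ← toReal_lintegral_coe_eq_integral,
    ENNReal.coe_toNNReal_eq_toReal]

theorem testIntegrals_add_smul (f : ι → X →ᵇ ℝ≥0) {μ ν : Measure X} [IsFiniteMeasure μ]
    [IsFiniteMeasure ν] (a b : ℝ≥0) :
    testIntegrals f ((a : ℝ≥0∞) • μ + (b : ℝ≥0∞) • ν)
      = (a : ℝ) • testIntegrals f μ + (b : ℝ) • testIntegrals f ν := by
  funext i
  simp only [testIntegrals, Pi.add_apply, Pi.smul_apply]
  have hint (ρ : Measure X) [IsFiniteMeasure ρ] : Integrable (fun x => (f i x : ℝ)) ρ :=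
    (f i).integrable_of_nnreal ρ
  rw [integral_add_measure ((hint μ).smul_measure ENNReal.coe_ne_top)
    ((hint ν).smul_measure ENNReal.coe_ne_top), integral_smul_measure, integral_smul_measure]
  simp

theorem integrable_testIntegrals_kernel [Fintype ι] {Z : Type*} [MeasurableSpace Z]
    {μ : Measure Z} [IsFiniteMeasure μ] {κ : Kernel Z X} [IsMarkovKernel κ]
    (f : ι → X →ᵇ ℝ≥0) : Integrable (fun z => testIntegrals f (κ z)) μ := by
  refine integrable_pi_iff.2 fun i =>
    Integrable.of_bound ?_ (dist 0 (f i)) (ae_of_all _ fun z => ?_)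
  · exact (StronglyMeasurable.integral_kernel (NNReal.continuous_coe.comp
      (f i).continuous).measurable.stronglyMeasurable).aestronglyMeasurable
  · refine (norm_integral_le_of_norm_le_const (C := dist 0 (f i))
      (ae_of_all _ fun x => ?_)).trans (by simp)
    simpa [← NNReal.coe_le_coe] using (f i).apply_le_nndist_zero x

theorem testIntegrals_bind [Fintype ι] {Z : Type*} [MeasurableSpace Z]
    {μ : Measure Z} [IsFiniteMeasure μ] {κ : Kernel Z X} [IsMarkovKernel κ]
    (f : ι → X →ᵇ ℝ≥0) : testIntegrals f (μ.bind κ) = ∫ z, testIntegrals f (κ z) ∂μ := by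
  funext i
  rw [eval_integral (integrable_pi_iff.1 (integrable_testIntegrals_kernel f))]
  exact Measure.integral_bind ((f i).integrable_of_nnreal _)

end TestIntegrals

section MixtureConvex

variable {X : Type*} [MeasurableSpace X]

def MixtureConvex (Γ : Set (ProbabilityMeasure X)) : Prop :=
  ∀ μ ∈ Γ, ∀ ν ∈ Γ, ∀ t : ℝ≥0, t ≤ 1 → ∀ ρ : ProbabilityMeasure X,
    (ρ : Measure X) = (t : ℝ≥0∞) • (μ : Measure X) + ((1 - t : ℝ≥0) : ℝ≥0∞) • (ν : Measure X) →
      ρ ∈ Γ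

variable [TopologicalSpace X] [OpensMeasurableSpace X] {Γ : Set (ProbabilityMeasure X)}

theorem MixtureConvex.convex_image_testIntegrals (hΓ : MixtureConvex Γ) {ι : Type*}
    (f : ι → X →ᵇ ℝ≥0) :
    Convex ℝ ((fun ν : ProbabilityMeasure X => testIntegrals f ν) '' Γ) := by
  rintro _ ⟨μ, hμ, rfl⟩ _ ⟨ν, hν, rfl⟩ a b ha hb hab
  lift a to ℝ≥0 using ha
  lift b to ℝ≥0 using hb
  have hab : a + b = 1 := by exact_mod_cast hab
  have hb : b = 1 - a := by rw [← hab, add_tsub_cancel_left]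
  let ρ : ProbabilityMeasure X :=
    ⟨(a : ℝ≥0∞) • μ + (b : ℝ≥0∞) • ν, ⟨by simp [← ENNReal.coe_add, hab]⟩⟩
  exact ⟨ρ, hΓ μ hμ ν hν a (hab ▸ le_self_add) ρ (hb ▸ rfl), testIntegrals_add_smul f a b⟩

theorem MixtureConvex.mem_closure_of_eq_bind (hΓ : MixtureConvex Γ) {Z : Type*} [MeasurableSpace Z]
    {μ : Measure Z} [IsProbabilityMeasure μ] {κ : Kernel Z X} [IsMarkovKernel κ]
    (hκ : ∀ z, ∃ ν ∈ Γ, (ν : Measure X) = κ z) {ρ : ProbabilityMeasure X}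
    (hρ : (ρ : Measure X) = μ.bind κ) : ρ ∈ closure Γ := by
  rw [ProbabilityMeasure.isInducing_testIntegrals.closure_eq_preimage_closure_image,
    Set.mem_preimage]
  refine mem_closure_of_forall_finset_restrict fun s => ?_
  rw [Set.image_image]
  change testIntegrals (fun f : s => (f : X →ᵇ ℝ≥0)) (ρ : Measure X)
    ∈ closure ((fun ν : ProbabilityMeasure X => testIntegrals (fun f : s => (f : X →ᵇ ℝ≥0)) ν) '' Γ)
  rw [hρ, testIntegrals_bind]
  refine (hΓ.convex_image_testIntegrals _).closure.integral_mem isClosed_closure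
    (ae_of_all _ fun z => subset_closure ?_) (integrable_testIntegrals_kernel _)
  obtain ⟨ν, hν, hνκ⟩ := hκ z
  exact ⟨ν, hν, congrArg (testIntegrals _) hνκ⟩

end MixtureConvex

theorem subset_cconvHull {X : Type*} [MeasurableSpace X] (Γ : Set (ProbabilityMeasure X)) :
    Γ ⊆ cconvHull.{u} Γ := fun μ hμ =>
  ⟨PUnit, ⊤, Measure.dirac PUnit.unit, inferInstance, Kernel.const _ μ, inferInstance,
    fun _ => ⟨μ, hμ, rfl⟩, by rw [Measure.dirac_bind (Kernel.const _ _).measurable]; rfl⟩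

theorem MixtureConvex.cconvHull_subset_closure {X : Type*} [MeasurableSpace X]
    [PseudoMetricSpace X] [OpensMeasurableSpace X] [TopologicalSpace.SeparableSpace X]
    {Γ : Set (ProbabilityMeasure X)} (hΓ : MixtureConvex Γ) :
    cconvHull.{u} Γ ⊆ {μ | toLP μ ∈ closure (toLP '' Γ)} := by
  rintro μ ⟨Z, mZ, QZ, hQZ, κ, hκ, hmem, hbind⟩
  change LevyProkhorov.probabilityMeasureHomeomorph μ
    ∈ closure (LevyProkhorov.probabilityMeasureHomeomorph '' Γ)
  rw [← Homeomorph.image_closure]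
  exact Set.mem_image_of_mem _ (hΓ.mem_closure_of_eq_bind hmem hbind)

/-- **(i) Closed Lévy–Prokhorov balls are completely convex; (ii) for Polish `X` and convex
`Γ`, `Γ ⊆ cconv Γ ⊆ cl Γ`** (closure in the Lévy–Prokhorov metric). -/
theorem lp_ball_completely_convex_and_cconv_between {X : Type*} [mX : MeasurableSpace X]
    [MetricSpace X] [BorelSpace X] :
    (∀ (PX : ProbabilityMeasure X) (ε : ℝ), 0 ≤ ε →
      ∀ (Z : Type u) (mZ : MeasurableSpace Z) (QZ : @MeasureTheory.Measure Z mZ)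
        (_ : @IsProbabilityMeasure Z mZ QZ) (κ : @ProbabilityTheory.Kernel Z X mZ mX)
        (_ : @ProbabilityTheory.IsMarkovKernel Z X mZ mX κ),
        (∀ z : Z, levyProkhorovEDist (κ z) (PX : Measure X) ≤ ENNReal.ofReal ε) →
        levyProkhorovEDist (@MeasureTheory.Measure.bind Z X mZ mX QZ (DFunLike.coe κ))
          (PX : Measure X) ≤ ENNReal.ofReal ε)
    ∧ (∀ (_ : TopologicalSpace.SeparableSpace X) (_ : CompleteSpace X)
        (Γ : Set (ProbabilityMeasure X)),
        (∀ μ ∈ Γ, ∀ ν ∈ Γ, ∀ t : ℝ≥0, t ≤ 1 → ∀ ρ : ProbabilityMeasure X,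
          (ρ : Measure X)
              = (t : ℝ≥0∞) • (μ : Measure X) + ((1 - t : ℝ≥0) : ℝ≥0∞) • (ν : Measure X) →
            ρ ∈ Γ) →
        Γ ⊆ cconvHull.{u} Γ
          ∧ cconvHull.{u} Γ ⊆ {μ | toLP μ ∈ closure (toLP '' Γ)}) :=
  ⟨fun _ _ _ _ _ _ _ _ _ h => levyProkhorovEDist_bind_le h,
    fun _ _ Γ hΓ => ⟨subset_cconvHull Γ, MixtureConvex.cconvHull_subset_closure hΓ⟩⟩
end
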